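/- arXiv:1808.02674 — 5 statements merged into one kernel-verified Lean document; each statement's English description precedes it below -/
import Mathlib

section
/- Let G be a connected bipartite graph on the vertex set Σ = {0,…,N−1}. For every n ≥ 1, the diameter of the hierarchical graph HM_n equals 2(n−1) + diam(G). -/
/-!
Upper bound: flipping a suffix of a word to neighbouring letters is one step of `HM`, so within
`n - 1` steps every word becomes uniform (all letters on one side of the bipartition). Two
uniform words are then joined by moving all coordinates simultaneously along walks of a common
length `≤ diam G`; such walks exist because all coordinate distances have the same parity.

Lower bound: the first letter can only move, along an edge of `G`, while the word is uniform, and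
one step changes the number of side switches between consecutive letters by at most one. Going
from the alternating word starting at `a` to the one starting at `b`, where `dist a b = diam G`,
thus costs `n - 1` steps to become uniform, `diam G` steps for the first letter and `n - 1` steps
to alternate again.
-/

open Filter Finset

/-- A subgraph `B` of a graph `H` is an `ℓ`-box if any two of its vertices are at
distance at most `ℓ - 1` *within* `B`. -/
def SimpleGraph.IsBox {V : Type*} (H : SimpleGraph V) (ℓ : ℕ) (B : H.Subgraph) : Prop :=
  ∀ u v : B.verts, B.coe.Reachable u v ∧ B.coe.dist u v ≤ ℓ - 1

/-- `coveringNumber H ℓ` is the minimum number of `ℓ`-boxes whose vertex sets cover `H`. -/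
noncomputable def coveringNumber {V : Type*} (H : SimpleGraph V) (ℓ : ℕ) : ℕ :=
  sInf {m : ℕ | ∃ F : Finset H.Subgraph, F.card = m ∧ (∀ B ∈ F, H.IsBox ℓ B) ∧
    ∀ v : V, ∃ B ∈ F, v ∈ B.verts}

/-- The adjacency-generating relation of the hierarchical model `HM_n`: the two words
agree on a (maximal) common prefix of length `k`; beyond the prefix one word has all
its letters in `V₁` (`typ = true`) and the other has all its letters in `V₂`
(`typ = false`); and every coordinate pair beyond the prefix is an edge of the base
graph `G`. -/
def HMRel (N : ℕ) (G : SimpleGraph (Fin N)) (typ : Fin N → Bool) (n : ℕ)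
    (x y : Fin n → Fin N) : Prop :=
  ∃ k : Fin n,
    (∀ i : Fin n, i < k → x i = y i) ∧
    (∃ t : Bool, (∀ i : Fin n, k ≤ i → typ (x i) = t) ∧
                 (∀ i : Fin n, k ≤ i → typ (y i) = !t)) ∧
    (∀ i : Fin n, k ≤ i → G.Adj (x i) (y i))

/-- The hierarchical graph `HM_n` on words of length `n` over the alphabet `Fin N`. -/
def HM (N : ℕ) (G : SimpleGraph (Fin N)) (typ : Fin N → Bool) (n : ℕ) :
    SimpleGraph (Fin n → Fin N) :=
  SimpleGraph.fromRel (HMRel N G typ n)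

namespace SimpleGraph

variable {V : Type*} {G : SimpleGraph V}

lemma Connected.exists_walk_length_eq_dist_add_two_mul [Nontrivial V] (hG : G.Connected)
    (a b : V) (k : ℕ) : ∃ p : G.Walk a b, p.length = G.dist a b + 2 * k := by
  induction k with
  | zero => exact hG.exists_walk_length_eq_dist a b
  | succ k ih =>
    obtain ⟨p, hp⟩ := ih
    obtain ⟨c, hc⟩ := hG.preconnected.exists_adj_of_nontrivial b
    exact ⟨(p.concat hc).concat hc.symm, by simp [hp]; ring⟩

lemma Connected.even_dist_iff {typ : V → Bool} (hG : G.Connected)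
    (hbip : ∀ x y, G.Adj x y → typ x ≠ typ y) (a b : V) :
    Even (G.dist a b) ↔ typ a = typ b := by
  obtain ⟨p, hp⟩ := hG.exists_walk_length_eq_dist a b
  rw [← hp]
  exact ((Coloring.mk typ (hbip _ _)).even_length_iff_congr p).trans Bool.eq_iff_iff.symm

lemma Walk.le_add_length_of_adj_le {f : V → ℕ} (hf : ∀ u v, G.Adj u v → f u ≤ f v + 1)
    {x y : V} (p : G.Walk x y) : f x ≤ f y + p.length := by
  induction p with
  | nil => simp
  | cons h _ ih =>
    have := hf _ _ h
    rw [Walk.length_cons]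
    omega

lemma Reachable.le_add_dist_of_adj_le {f : V → ℕ} (hf : ∀ u v, G.Adj u v → f u ≤ f v + 1)
    {x y : V} (h : G.Reachable x y) : f x ≤ f y + G.dist x y := by
  obtain ⟨p, hp⟩ := h.exists_walk_length_eq_dist
  exact hp ▸ p.le_add_length_of_adj_le hf

end SimpleGraph

lemma typ_eq_not_of_adj {V : Type*} {G : SimpleGraph V} {typ : V → Bool}
    (hbip : ∀ x y, G.Adj x y → typ x ≠ typ y) {a b : V} {t : Bool} (h : G.Adj a b)
    (ha : typ a = t) : typ b = !t := by
  rw [← ha, Bool.eq_not_iff]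
  exact (hbip a b h).symm

def alternatingWord {α : Type*} (m : ℕ) (a a' : α) : Fin (m + 1) → α :=
  fun i => if Even (i : ℕ) then a else a'

lemma comp_alternatingWord {α β : Type*} (f : α → β) (m : ℕ) (a a' : α) :
    f ∘ alternatingWord m a a' = alternatingWord m (f a) (f a') := by
  ext i
  simp only [Function.comp, alternatingWord, apply_ite f]

section switchCount

variable {α : Type*} [DecidableEq α] {m : ℕ}

def switchCount (c : Fin (m + 1) → α) : ℕ :=
  #{i : Fin m | c i.castSucc ≠ c i.succ}

lemma switchCount_le (c : Fin (m + 1) → α) : switchCount c ≤ m :=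
  (card_filter_le _ _).trans_eq (card_fin m)

lemma switchCount_eq_zero_of_forall_eq {c : Fin (m + 1) → α} {a : α} (h : ∀ i, c i = a) :
    switchCount c = 0 := by
  simp [switchCount, h]

lemma switchCount_alternatingWord {a a' : α} (h : a ≠ a') :
    switchCount (alternatingWord m a a') = m := by
  unfold switchCount alternatingWord
  simp [Fin.val_succ, Nat.even_add_one, apply_ite, h, h.symm]

lemma switchCount_le_add_one {c d : Fin (m + 1) → α} (k : Fin (m + 1))
    (hpre : ∀ i < k, c i = d i) (hsuf : ∀ i, k ≤ i → c i = c k) :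
    switchCount c ≤ switchCount d + 1 := by
  have hsub : ∀ i : Fin m, c i.castSucc ≠ c i.succ → d i.castSucc ≠ d i.succ ∨ i.succ = k := by
    intro i hi
    rcases lt_trichotomy i.succ k with h | h | h
    · left
      rwa [← hpre _ h, ← hpre _ (Fin.castSucc_lt_succ.trans h)]
    · exact .inr h
    · exact absurd ((hsuf _ (Fin.le_castSucc_iff.2 h)).trans (hsuf _ h.le).symm) hi
  calc switchCount c ≤ #{i : Fin m | d i.castSucc ≠ d i.succ ∨ i.succ = k} :=
        card_le_card fun i => by simpa using hsub i
    _ ≤ switchCount d + #{i : Fin m | i.succ = k} := by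
        rw [filter_or]
        exact card_union_le _ _
    _ ≤ switchCount d + 1 := by
        gcongr
        exact card_le_one.2 fun i hi j hj => Fin.succ_injective _ (by simp_all)

end switchCount

open SimpleGraph

namespace HM

variable {N : ℕ} {G : SimpleGraph (Fin N)} {typ : Fin N → Bool}

lemma _root_.HMRel.symm {n : ℕ} {x y : Fin n → Fin N} (h : HMRel N G typ n x y) :
    HMRel N G typ n y x := by
  obtain ⟨k, hpre, ⟨t, hx, hy⟩, hadj⟩ := h
  exact ⟨k, fun i hi => (hpre i hi).symm, ⟨!t, hy, fun i hi => by simp [hx i hi]⟩,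
    fun i hi => (hadj i hi).symm⟩

lemma adj_iff {n : ℕ} {x y : Fin n → Fin N} :
    (HM N G typ n).Adj x y ↔ HMRel N G typ n x y := by
  rw [HM, fromRel_adj]
  refine ⟨fun ⟨_, h⟩ => h.elim id HMRel.symm, fun h => ⟨?_, .inl h⟩⟩
  obtain ⟨k, -, -, hadj⟩ := h
  rintro rfl
  exact (hadj k le_rfl).ne rfl

lemma adj_of_suffix (hbip : ∀ x y, G.Adj x y → typ x ≠ typ y) {n : ℕ}
    {x y : Fin n → Fin N} (k : Fin n) {t : Bool} (hpre : ∀ i < k, x i = y i)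
    (htyp : ∀ i, k ≤ i → typ (x i) = t) (hadj : ∀ i, k ≤ i → G.Adj (x i) (y i)) :
    (HM N G typ n).Adj x y :=
  adj_iff.2 ⟨k, hpre, ⟨t, htyp, fun i hi => typ_eq_not_of_adj hbip (hadj i hi) (htyp i hi)⟩,
    hadj⟩

variable {m : ℕ}

lemma exists_walk_of_forall_walk (hbip : ∀ x y, G.Adj x y → typ x ≠ typ y) {ℓ : ℕ}
    {x y : Fin (m + 1) → Fin N} {t : Bool} (hx : ∀ i, typ (x i) = t)
    (hw : ∀ i, ∃ p : G.Walk (x i) (y i), p.length = ℓ) :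
    ∃ P : (HM N G typ (m + 1)).Walk x y, P.length = ℓ := by
  induction ℓ generalizing x t with
  | zero =>
    obtain rfl : x = y := funext fun i => (hw i).elim fun p hp => p.eq_of_length_eq_zero hp
    exact ⟨.nil, rfl⟩
  | succ ℓ ih =>
    have hstep : ∀ i, ∃ z, G.Adj (x i) z ∧ ∃ q : G.Walk z (y i), q.length = ℓ := by
      intro i
      obtain ⟨p, hp⟩ := hw i
      have hnil : ¬ p.Nil := by rw [Walk.not_nil_iff_lt_length]; omega
      exact ⟨p.snd, p.adj_snd hnil, p.tail, by rw [Walk.length_tail]; omega⟩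
    choose z hxz hzy using hstep
    have hz : ∀ i, typ (z i) = !t := fun i => typ_eq_not_of_adj hbip (hxz i) (hx i)
    obtain ⟨P, hP⟩ := ih hz hzy
    have hxz' : (HM N G typ (m + 1)).Adj x z :=
      adj_of_suffix hbip 0 (fun i hi => absurd hi (Fin.not_lt_zero i)) (fun i _ => hx i)
        fun i _ => hxz i
    exact ⟨.cons hxz' P, by simp [hP]⟩

lemma exists_adj_flip_suffix [Nontrivial (Fin N)] (hG : G.Connected)
    (hbip : ∀ x y, G.Adj x y → typ x ≠ typ y) {n : ℕ} {x : Fin n → Fin N} (k : Fin n)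
    {t : Bool} (hx : ∀ i, k ≤ i → typ (x i) = t) :
    ∃ y, (HM N G typ n).Adj x y ∧ (∀ i < k, y i = x i) ∧ ∀ i, k ≤ i → typ (y i) = !t := by
  choose nb hnb using hG.preconnected.exists_adj_of_nontrivial
  let y : Fin n → Fin N := fun i => if k ≤ i then nb (x i) else x i
  have hlt : ∀ i < k, y i = x i := fun i hi => if_neg (not_le.2 hi)
  have hge : ∀ i, k ≤ i → y i = nb (x i) := fun i hi => if_pos hi
  refine ⟨y, adj_of_suffix hbip k (fun i hi => (hlt i hi).symm) hx fun i hi => ?_, hlt,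
    fun i hi => ?_⟩
  · exact hge i hi ▸ hnb (x i)
  · exact hge i hi ▸ typ_eq_not_of_adj hbip (hnb (x i)) (hx i hi)

lemma exists_walk_to_uniform_of_suffix [Nontrivial (Fin N)] (hG : G.Connected)
    (hbip : ∀ x y, G.Adj x y → typ x ≠ typ y) {j : ℕ} (hj : j ≤ m)
    {x : Fin (m + 1) → Fin N} {t : Bool} (hx : ∀ i : Fin (m + 1), j ≤ (i : ℕ) → typ (x i) = t) :
    ∃ (z : Fin (m + 1) → Fin N) (s : Bool), (∀ i, typ (z i) = s) ∧
      ∃ P : (HM N G typ (m + 1)).Walk x z, P.length ≤ j := by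
  induction j generalizing x t with
  | zero => exact ⟨x, t, fun i => hx i i.val.zero_le, .nil, le_rfl⟩
  | succ j ih =>
    let jj : Fin (m + 1) := ⟨j, by omega⟩
    have hge : ∀ i : Fin (m + 1), j ≤ (i : ℕ) → i = jj ∨ j + 1 ≤ (i : ℕ) := fun i hi =>
      hi.eq_or_lt.imp (fun h => Fin.ext h.symm) id
    obtain ⟨w, s, hw, P, hP⟩ : ∃ (w : Fin (m + 1) → Fin N) (s : Bool),
        (∀ i : Fin (m + 1), j ≤ (i : ℕ) → typ (w i) = s) ∧
        ∃ P : (HM N G typ (m + 1)).Walk x w, P.length ≤ 1 := by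
      by_cases hcase : typ (x jj) = t
      · refine ⟨x, t, fun i hi => ?_, .nil, zero_le_one⟩
        rcases hge i hi with rfl | hi
        exacts [hcase, hx i hi]
      · obtain ⟨y, hxy, hlt, hy⟩ :=
          exists_adj_flip_suffix hG hbip ⟨j + 1, by omega⟩ fun i hi => hx i hi
        refine ⟨y, !t, fun i hi => ?_, hxy.toWalk, le_rfl⟩
        rcases hge i hi with rfl | hi
        · rw [hlt jj (Fin.lt_def.2 (Nat.lt_succ_self j)), Bool.eq_not_iff]
          exact hcase
        · exact hy i hi
    obtain ⟨z, s', hz, Q, hQ⟩ := ih (by omega) hw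
    exact ⟨z, s', hz, P.append Q, by rw [Walk.length_append]; omega⟩

lemma exists_walk_length_le_diam_of_uniform [Nontrivial (Fin N)] (hG : G.Connected)
    (hbip : ∀ x y, G.Adj x y → typ x ≠ typ y) {x y : Fin (m + 1) → Fin N} {s t : Bool}
    (hx : ∀ i, typ (x i) = s) (hy : ∀ i, typ (y i) = t) :
    ∃ P : (HM N G typ (m + 1)).Walk x y, P.length ≤ G.diam := by
  obtain ⟨i₀, hi₀⟩ := Finite.exists_max fun i => G.dist (x i) (y i)
  have hwalk : ∀ i, ∃ p : G.Walk (x i) (y i), p.length = G.dist (x i₀) (y i₀) := by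
    intro i
    have hpar : Even (G.dist (x i₀) (y i₀) - G.dist (x i) (y i)) := by
      rw [Nat.even_sub (hi₀ i), hG.even_dist_iff hbip, hG.even_dist_iff hbip, hx, hy, hx, hy]
    obtain ⟨k, hk⟩ := hpar
    obtain ⟨p, hp⟩ := hG.exists_walk_length_eq_dist_add_two_mul (x i) (y i) k
    exact ⟨p, by have := hi₀ i; omega⟩
  obtain ⟨P, hP⟩ := exists_walk_of_forall_walk hbip hx hwalk
  exact ⟨P, hP ▸ dist_le_diam (connected_iff_ediam_ne_top.1 hG)⟩

lemma exists_walk_length_le [Nontrivial (Fin N)] (hG : G.Connected)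
    (hbip : ∀ x y, G.Adj x y → typ x ≠ typ y) (x y : Fin (m + 1) → Fin N) :
    ∃ P : (HM N G typ (m + 1)).Walk x y, P.length ≤ 2 * m + G.diam := by
  have hlast : ∀ (z : Fin (m + 1) → Fin N) (i : Fin (m + 1)), m ≤ (i : ℕ) →
      typ (z i) = typ (z (Fin.last m)) := fun z i hi => by
    rw [show i = Fin.last m from Fin.ext (by rw [Fin.val_last]; omega)]
  obtain ⟨x', s, hx', P, hP⟩ := exists_walk_to_uniform_of_suffix hG hbip le_rfl (hlast x)
  obtain ⟨y', t, hy', Q, hQ⟩ := exists_walk_to_uniform_of_suffix hG hbip le_rfl (hlast y)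
  obtain ⟨R, hR⟩ := exists_walk_length_le_diam_of_uniform hG hbip hx' hy'
  refine ⟨P.append (R.append Q.reverse), ?_⟩
  simp only [Walk.length_append, Walk.length_reverse]
  omega

lemma connected [Nontrivial (Fin N)] (hG : G.Connected)
    (hbip : ∀ x y, G.Adj x y → typ x ≠ typ y) : (HM N G typ (m + 1)).Connected :=
  (connected_iff _).2
    ⟨fun x y => (exists_walk_length_le hG hbip x y).elim fun P _ => P.reachable, inferInstance⟩

lemma diam_le [Nontrivial (Fin N)] (hG : G.Connected)
    (hbip : ∀ x y, G.Adj x y → typ x ≠ typ y) :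
    (HM N G typ (m + 1)).diam ≤ 2 * m + G.diam := by
  obtain ⟨x, y, hxy⟩ := (HM N G typ (m + 1)).exists_dist_eq_diam
  obtain ⟨P, hP⟩ := exists_walk_length_le hG hbip x y
  exact hxy ▸ (dist_le P).trans hP

lemma switchCount_le_of_adj {u v : Fin (m + 1) → Fin N} (h : (HM N G typ (m + 1)).Adj u v) :
    switchCount (typ ∘ u) ≤ switchCount (typ ∘ v) + 1 := by
  obtain ⟨k, hpre, ⟨t, hu, -⟩, -⟩ := adj_iff.1 h
  exact switchCount_le_add_one k (fun i hi => congrArg typ (hpre i hi))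
    fun i hi => (hu i hi).trans (hu k le_rfl).symm

lemma switchCount_eq_zero_and_adj_of_adj {u v : Fin (m + 1) → Fin N}
    (h : (HM N G typ (m + 1)).Adj u v) (h0 : u 0 ≠ v 0) :
    switchCount (typ ∘ u) = 0 ∧ G.Adj (u 0) (v 0) := by
  obtain ⟨k, hpre, ⟨t, hu, -⟩, hadj⟩ := adj_iff.1 h
  obtain rfl : k = 0 := by
    by_contra hk
    exact h0 (hpre 0 (Fin.pos_iff_ne_zero.2 hk))
  exact ⟨switchCount_eq_zero_of_forall_eq fun i => hu i (Fin.zero_le i), hadj 0 le_rfl⟩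

-- `potential b v = 0` for the alternating word `v` starting with `b`, and `potential` is
-- 1-Lipschitz along `HM`, so `potential b u` bounds the distance from `u` to `v` from below.
variable (G typ) in
noncomputable def potential (b : Fin N) (u : Fin (m + 1) → Fin N) : ℕ :=
  if u 0 = b then m - switchCount (typ ∘ u) else m + switchCount (typ ∘ u) + G.dist (u 0) b

lemma potential_le_of_adj (hG : G.Connected) (b : Fin N) {u v : Fin (m + 1) → Fin N}
    (h : (HM N G typ (m + 1)).Adj u v) : potential G typ b u ≤ potential G typ b v + 1 := by
  have huv := switchCount_le_of_adj h
  have hvu := switchCount_le_of_adj h.symm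
  have hu := switchCount_le (typ ∘ u)
  have hv := switchCount_le (typ ∘ v)
  unfold potential
  by_cases h0 : u 0 = v 0
  · rw [h0]
    split_ifs <;> omega
  obtain ⟨hu0, hadj⟩ := switchCount_eq_zero_and_adj_of_adj h h0
  obtain ⟨hv0, -⟩ := switchCount_eq_zero_and_adj_of_adj h.symm (Ne.symm h0)
  have hd : G.dist (u 0) b ≤ G.dist (v 0) b + 1 := by
    have := hG.dist_triangle (u := u 0) (v := v 0) (w := b)
    rw [dist_eq_one_iff_adj.2 hadj] at this
    omega
  split_ifs with hub hvb hvb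
  · exact absurd (hub.trans hvb.symm) h0
  · omega
  · rw [hvb, dist_self] at hd
    omega
  · omega

lemma le_diam [Nontrivial (Fin N)] (hG : G.Connected)
    (hbip : ∀ x y, G.Adj x y → typ x ≠ typ y) :
    2 * m + G.diam ≤ (HM N G typ (m + 1)).diam := by
  obtain ⟨a, b, hab⟩ := G.exists_dist_eq_diam
  have hne : a ≠ b := by
    rintro rfl
    exact diam_ne_zero_of_ediam_ne_top (connected_iff_ediam_ne_top.1 hG)
      (hab ▸ dist_self)
  obtain ⟨a', ha'⟩ := hG.preconnected.exists_adj_of_nontrivial a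
  obtain ⟨b', hb'⟩ := hG.preconnected.exists_adj_of_nontrivial b
  have hswitch : ∀ {c c' : Fin N}, G.Adj c c' →
      switchCount (typ ∘ alternatingWord m c c') = m := fun h => by
    rw [comp_alternatingWord]
    exact switchCount_alternatingWord (hbip _ _ h)
  have hHM : (HM N G typ (m + 1)).Connected := connected hG hbip
  calc 2 * m + G.diam = potential G typ b (alternatingWord m a a') := by
        simp [potential, alternatingWord, hne, hswitch ha', hab, two_mul]
    _ ≤ potential G typ b (alternatingWord m b b') +
          (HM N G typ (m + 1)).dist (alternatingWord m a a') (alternatingWord m b b') :=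
        (hHM.preconnected _ _).le_add_dist_of_adj_le fun u v h => potential_le_of_adj hG b h
    _ = (HM N G typ (m + 1)).dist (alternatingWord m a a') (alternatingWord m b b') := by
        simp [potential, alternatingWord, hswitch hb']
    _ ≤ (HM N G typ (m + 1)).diam :=
        dist_le_diam (connected_iff_ediam_ne_top.1 hHM)

end HM

/-- For a connected bipartite base graph `G` (with bipartition given by
`typ`, both parts nonempty), the diameter of `HM_n` equals `2(n-1) + diam(G)` for all
`n ≥ 1`. -/
theorem hm_diam (N : ℕ) (G : SimpleGraph (Fin N)) (typ : Fin N → Bool)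
    (hconn : G.Connected)
    (hbip : ∀ x y : Fin N, G.Adj x y → typ x ≠ typ y)
    (hV1 : ∃ x, typ x = true) (hV2 : ∃ x, typ x = false)
    (n : ℕ) (hn : 1 ≤ n) :
    (HM N G typ n).diam = 2 * (n - 1) + G.diam := by
  obtain ⟨p, hp⟩ := hV1
  obtain ⟨q, hq⟩ := hV2
  have : Nontrivial (Fin N) := nontrivial_of_ne p q (by rintro rfl; simp_all)
  obtain ⟨m, rfl⟩ : ∃ m, n = m + 1 := ⟨n - 1, by omega⟩
  rw [Nat.add_sub_cancel]
  exact (HM.diam_le hconn hbip).antisymm (HM.le_diam hconn hbip)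
end

section
/- Let G be a connected bipartite graph on N vertices and {HM_n} the associated hierarchical graph sequence. Then the transfinite fractal dimension of {HM_n} exists and equals (log N)/2; that is, lim_{ℓ→∞} lim_{n→∞} log(N_B^n(ℓ)/N^n)/(−ℓ) = (log N)/2. -/
/-!
Write `a_ℓ(n) = N_B^n(ℓ) / N^n`. Prepending a letter embeds `HM_n` into `HM_{n+1}`, so
`N_B^{n+1}(ℓ) ≤ N · N_B^n(ℓ)` and `log a_ℓ(n)` decreases in `n`; its limit is pinned between
`-(ℓ/2 + 1) log N` and `-(ℓ/2 - N - 1) log N`, which gives `(log N)/2` after dividing by `-ℓ`.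

Lower bound: an edge of `HM_n` only changes a suffix on which the word has constant type. Along a
walk from a word whose letter types alternate on its last `M` positions, each step can therefore
eat at most one letter of the alternating tail, and the prefix before it survives `M - 1` steps.
Words with such tails and distinct prefixes are thus at distance at least `2M - 1`, so for
`ℓ < 2M` they lie in distinct `ℓ`-boxes and `N_B^n(ℓ) ≥ N^{n-M}`.

Upper bound: a word of `HM_m` reaches a word of constant type in `m - 1` steps, by repeatedly moving
its constant-type suffix to neighbouring letters; two words of constant type are joined by moving
all coordinates at once along walks in `G` of a common length `N` or `N + 1`, which exist because
`G` is connected and bipartite. So `HM_m` is a single `ℓ`-box once `2m + N ≤ ℓ`.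
-/

open Filter Finset

namespace SimpleGraph

variable {V V' : Type*} {H : SimpleGraph V} {H' : SimpleGraph V'} {ℓ : ℕ}

lemma exists_walk_of_adj_succ (f : ℕ → V) (L : ℕ) (h : ∀ j < L, H.Adj (f j) (f (j + 1))) :
    ∃ p : H.Walk (f 0) (f L), p.length = L := by
  induction L with
  | zero => exact ⟨.nil, rfl⟩
  | succ L ih =>
    obtain ⟨p, hp⟩ := ih fun j hj => h j (by omega)
    exact ⟨p.concat (h L L.lt_succ_self), by simp [hp]⟩

lemma Walk.exists_length_eq_of_even_sub {u v w : V} (p : H.Walk u v) (huw : H.Adj u w) {L : ℕ}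
    (hle : p.length ≤ L) (heven : Even (L - p.length)) : ∃ q : H.Walk u v, q.length = L := by
  obtain ⟨j, hj⟩ := heven
  obtain rfl : L = p.length + 2 * j := by omega
  clear hle hj
  induction j with
  | zero => exact ⟨p, rfl⟩
  | succ j ih =>
    obtain ⟨q, hq⟩ := ih
    exact ⟨.cons huw (.cons huw.symm q), by simp [hq]; omega⟩

lemma IsBox.map (f : H →g H') {B : H.Subgraph} (hB : H.IsBox ℓ B) : H'.IsBox ℓ (B.map f) := by
  let ψ : B.coe →g (B.map f).coe :=
    { toFun := fun z => ⟨f z, Set.mem_image_of_mem f z.2⟩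
      map_rel' := fun {z z'} h => ⟨z, z', h, rfl, rfl⟩ }
  rintro ⟨_, u, hu, rfl⟩ ⟨_, v, hv, rfl⟩
  obtain ⟨hreach, hdist⟩ := hB ⟨u, hu⟩ ⟨v, hv⟩
  obtain ⟨p, hp⟩ := hreach.exists_walk_length_eq_dist
  refine ⟨hreach.map ψ, (dist_le (p.map ψ)).trans ?_⟩
  rwa [Walk.length_map, hp]

lemma isBox_singletonSubgraph (v : V) : H.IsBox ℓ (H.singletonSubgraph v) := by
  rintro ⟨u, rfl⟩ ⟨w, rfl⟩
  simp

lemma isBox_top (h : ∀ u v, ∃ p : H.Walk u v, p.length ≤ ℓ - 1) : H.IsBox ℓ ⊤ := by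
  intro u v
  obtain ⟨p, hp⟩ := h u v
  let q : (⊤ : H.Subgraph).coe.Walk u v := p.map Subgraph.topIso.symm.toHom
  exact ⟨⟨q⟩, (dist_le q).trans ((Walk.length_map _ _).trans_le hp)⟩

end SimpleGraph

open SimpleGraph

section CoveringNumber

variable {V V' : Type*} {H : SimpleGraph V} {H' : SimpleGraph V'} {ℓ : ℕ}

lemma coveringNumber_le_card_of_cover {F : Finset H.Subgraph} (hbox : ∀ B ∈ F, H.IsBox ℓ B)
    (hcov : ∀ v, ∃ B ∈ F, v ∈ B.verts) : coveringNumber H ℓ ≤ F.card :=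
  Nat.sInf_le ⟨F, rfl, hbox, hcov⟩

lemma exists_cover_card_eq_coveringNumber [Fintype V] :
    ∃ F : Finset H.Subgraph, F.card = coveringNumber H ℓ ∧ (∀ B ∈ F, H.IsBox ℓ B) ∧
      ∀ v, ∃ B ∈ F, v ∈ B.verts := by
  classical
  have hbox : ∀ B ∈ univ.image H.singletonSubgraph, H.IsBox ℓ B := by
    simpa using fun v => isBox_singletonSubgraph v
  exact Nat.sInf_mem (s := {m | ∃ F : Finset H.Subgraph, F.card = m ∧
      (∀ B ∈ F, H.IsBox ℓ B) ∧ ∀ v, ∃ B ∈ F, v ∈ B.verts})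
    ⟨_, _, rfl, hbox, fun v => ⟨_, mem_image_of_mem _ (mem_univ v), rfl⟩⟩

lemma one_le_coveringNumber [Fintype V] [Nonempty V] : 1 ≤ coveringNumber H ℓ := by
  obtain ⟨F, hcard, -, hcov⟩ := exists_cover_card_eq_coveringNumber (H := H) (ℓ := ℓ)
  obtain ⟨B, hB, -⟩ := hcov (Classical.arbitrary V)
  exact hcard ▸ card_pos.2 ⟨B, hB⟩

lemma coveringNumber_le_one (h : ∀ u v, ∃ p : H.Walk u v, p.length ≤ ℓ - 1) :
    coveringNumber H ℓ ≤ 1 :=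
  coveringNumber_le_card_of_cover (F := {⊤}) (by simpa using isBox_top h) (by simp)

lemma coveringNumber_le_card_mul [Fintype V] {α : Type*} [Fintype α] (f : α → H →g H')
    (hf : ∀ v', ∃ a v, f a v = v') :
    coveringNumber H' ℓ ≤ Fintype.card α * coveringNumber H ℓ := by
  classical
  obtain ⟨F, hcard, hbox, hcov⟩ := exists_cover_card_eq_coveringNumber (H := H) (ℓ := ℓ)
  calc coveringNumber H' ℓ ≤ (image (fun aB => aB.2.map (f aB.1)) (univ ×ˢ F)).card := by
        refine coveringNumber_le_card_of_cover ?_ fun v' => ?_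
        · simp only [mem_image, mem_product, mem_univ, true_and]
          rintro _ ⟨⟨a, B⟩, hB, rfl⟩
          exact (hbox B hB).map (f a)
        · obtain ⟨a, v, rfl⟩ := hf v'
          obtain ⟨B, hB, hv⟩ := hcov v
          exact ⟨B.map (f a), mem_image.2 ⟨(a, B), mem_product.2 ⟨mem_univ a, hB⟩, rfl⟩, v, hv, rfl⟩
    _ ≤ (univ ×ˢ F).card := card_image_le
    _ = Fintype.card α * coveringNumber H ℓ := by rw [card_product, card_univ, hcard]

lemma card_le_coveringNumber [Fintype V] {ι : Type*} [Fintype ι] (f : ι → V)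
    (hf : ∀ i j (p : H.Walk (f i) (f j)), p.length ≤ ℓ - 1 → i = j) :
    Fintype.card ι ≤ coveringNumber H ℓ := by
  obtain ⟨F, hcard, hbox, hcov⟩ := exists_cover_card_eq_coveringNumber (H := H) (ℓ := ℓ)
  choose φ hφF hφ using fun i => hcov (f i)
  have hinj : Function.Injective φ := by
    intro i j hij
    obtain ⟨hreach, hdist⟩ := hbox (φ i) (hφF i) ⟨f i, hφ i⟩ ⟨f j, hij ▸ hφ j⟩
    obtain ⟨p, hp⟩ := hreach.exists_walk_length_eq_dist
    exact hf i j (p.map (φ i).hom) (((Walk.length_map _ _).trans hp).trans_le hdist)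
  calc Fintype.card ι ≤ Fintype.card F :=
        Fintype.card_le_of_injective (fun i => ⟨φ i, hφF i⟩) fun i j h => hinj congr($h.1)
    _ = coveringNumber H ℓ := by rw [Fintype.card_coe, hcard]

end CoveringNumber

lemma exists_tendsto_div_neg_of_antitone {v : ℕ → ℕ → ℝ} {β C₁ C₂ : ℝ}
    (hanti : ∀ ℓ, Antitone (v ℓ)) (hlow : ∀ ℓ, ∀ᶠ n in atTop, -(β * ℓ + C₁) ≤ v ℓ n)
    (hup : ∀ᶠ ℓ in atTop, ∃ n, v ℓ n ≤ -(β * ℓ - C₂)) :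
    ∃ L : ℕ → ℝ, (∀ ℓ, Tendsto (fun n => v ℓ n / -(ℓ : ℝ)) atTop (nhds (L ℓ))) ∧
      Tendsto L atTop (nhds β) := by
  have hbdd : ∀ ℓ, BddBelow (Set.range (v ℓ)) := fun ℓ => by
    obtain ⟨n₀, hn₀⟩ := (hlow ℓ).exists_forall_of_atTop
    exact ⟨_, Set.forall_mem_range.2 fun n =>
      (hn₀ _ (le_max_right n n₀)).trans (hanti ℓ (le_max_left n n₀))⟩
  have hlim : ∀ ℓ, Tendsto (v ℓ) atTop (nhds (⨅ n, v ℓ n)) := fun ℓ =>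
    tendsto_atTop_ciInf (hanti ℓ) (hbdd ℓ)
  refine ⟨fun ℓ => (⨅ n, v ℓ n) / -(ℓ : ℝ), fun ℓ => (hlim ℓ).div_const _, ?_⟩
  refine tendsto_of_tendsto_of_tendsto_of_le_of_le' (g := fun ℓ : ℕ => β - C₂ / ℓ)
    (h := fun ℓ : ℕ => β + C₁ / ℓ) ?_ ?_ ?_ ?_
  · simpa using tendsto_const_nhds.sub (tendsto_const_div_atTop_nhds_zero_nat C₂)
  · simpa using tendsto_const_nhds.add (tendsto_const_div_atTop_nhds_zero_nat C₁)
  · filter_upwards [hup, eventually_gt_atTop 0] with ℓ ⟨n, hn⟩ hℓ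
    have hℓ' : (0 : ℝ) < ℓ := by exact_mod_cast hℓ
    rw [le_div_iff_of_neg (by linarith), show (β - C₂ / ℓ) * -(ℓ : ℝ) = -(β * ℓ - C₂) by
      field_simp]
    exact (ciInf_le (hbdd ℓ) n).trans hn
  · filter_upwards [eventually_gt_atTop 0] with ℓ hℓ
    have hℓ' : (0 : ℝ) < ℓ := by exact_mod_cast hℓ
    rw [div_le_iff_of_neg (by linarith), show (β + C₁ / ℓ) * -(ℓ : ℝ) = -(β * ℓ + C₁) by
      field_simp]
    exact ge_of_tendsto (hlim ℓ) (hlow ℓ)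

lemma exists_le_le_add_one_even_iff (m : ℕ) (P : Prop) : ∃ L, m ≤ L ∧ L ≤ m + 1 ∧ (Even L ↔ P) := by
  by_cases h : Even m ↔ P
  · exact ⟨m, le_rfl, by omega, h⟩
  · exact ⟨m + 1, by omega, le_rfl, by rw [Nat.even_add_one]; tauto⟩

section HierarchicalModel

variable {N : ℕ} {G : SimpleGraph (Fin N)} {typ : Fin N → Bool} {n : ℕ}

lemma hmRel_of_adj {x y : Fin n → Fin N} (h : (HM N G typ n).Adj x y) : HMRel N G typ n x y := by
  rw [HM, fromRel_adj] at h
  obtain ⟨-, h | ⟨k, hpre, ⟨t, hy, hx⟩, hadj⟩⟩ := h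
  · exact h
  · exact ⟨k, fun i hi => (hpre i hi).symm, ⟨!t, hx, by simpa using hy⟩,
      fun i hi => (hadj i hi).symm⟩

lemma hm_adj_of_suffix (hbip : ∀ a b, G.Adj a b → typ a ≠ typ b) {x y : Fin n → Fin N}
    (k : Fin n) {t : Bool} (hpre : ∀ i < k, x i = y i) (hx : ∀ i, k ≤ i → typ (x i) = t)
    (hadj : ∀ i, k ≤ i → G.Adj (x i) (y i)) : (HM N G typ n).Adj x y := by
  refine (fromRel_adj _ _ _).2 ⟨fun h => (hadj k le_rfl).ne (congrFun h k),
    Or.inl ⟨k, hpre, ⟨t, hx, fun i hi => ?_⟩, hadj⟩⟩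
  rw [Bool.eq_not_iff, ← hx i hi]
  exact (hbip _ _ (hadj i hi)).symm

lemma hmRel_cons (a : Fin N) {x y : Fin n → Fin N} (h : HMRel N G typ n x y) :
    HMRel N G typ (n + 1) (Fin.cons a x) (Fin.cons a y) := by
  obtain ⟨k, hpre, ⟨t, hx, hy⟩, hadj⟩ := h
  refine ⟨k.succ, ?_, ⟨t, ?_, ?_⟩, ?_⟩ <;>
    simpa [Fin.forall_fin_succ, Fin.succ_pos, not_le.2 (Fin.succ_pos k)]

def hmConsHom (a : Fin N) : HM N G typ n →g HM N G typ (n + 1) where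
  toFun x := Fin.cons a x
  map_rel' {x y} h := by
    rw [HM, fromRel_adj] at h ⊢
    exact ⟨fun hxy => h.1 (by simpa using hxy),
      h.2.imp (hmRel_cons a) (hmRel_cons a)⟩

lemma coveringNumber_hm_succ_le (ℓ : ℕ) :
    coveringNumber (HM N G typ (n + 1)) ℓ ≤ N * coveringNumber (HM N G typ n) ℓ := by
  simpa using coveringNumber_le_card_mul (ℓ := ℓ) (hmConsHom (G := G) (typ := typ) (n := n))
    fun w => ⟨w 0, Fin.tail w, Fin.cons_self_tail w⟩

lemma hm_adj_apply_eq_of_typ_ne {w w' : Fin n → Fin N} (h : (HM N G typ n).Adj w w')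
    {j j' : Fin n} (hjj' : j ≤ j') (hne : typ (w j) ≠ typ (w j')) {i : Fin n} (hi : i ≤ j) :
    w' i = w i := by
  obtain ⟨k, hpre, ⟨t, hw, -⟩, -⟩ := hmRel_of_adj h
  have hjk : j < k := lt_of_not_ge fun hkj => hne ((hw j hkj).trans (hw j' (hkj.trans hjj')).symm)
  exact (hpre i (hi.trans_lt hjk)).symm

def TypAlternatesFrom (typ : Fin N → Bool) (k : ℕ) (x : Fin n → Fin N) : Prop :=
  ∀ i j : Fin n, k ≤ (i : ℕ) → (j : ℕ) = i + 1 → typ (x i) ≠ typ (x j)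

lemma hm_walk_apply_eq_of_typAlternatesFrom {x : Fin n → Fin N} {k : ℕ}
    (hx : TypAlternatesFrom typ k x) {w z : Fin n → Fin N} (p : (HM N G typ n).Walk w z) {q : ℕ}
    (hw : ∀ i : Fin n, (i : ℕ) < q → w i = x i) (hkq : k + p.length < q) (hqn : q ≤ n) :
    ∀ i : Fin n, (i : ℕ) + p.length < q → z i = x i := by
  induction p generalizing q with
  | nil => simpa using hw
  | @cons w w' z h p ih =>
    rw [Walk.length_cons] at hkq
    have hw' : ∀ i : Fin n, (i : ℕ) < q - 1 → w' i = x i := by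
      intro i hi
      let j : Fin n := ⟨q - 2, by omega⟩
      let j' : Fin n := ⟨q - 1, by omega⟩
      have hne : typ (w j) ≠ typ (w j') := by
        rw [hw j (by simp [j]; omega), hw j' (by simp [j']; omega)]
        exact hx j j' (by simp [j]; omega) (by simp [j, j']; omega)
      rw [hm_adj_apply_eq_of_typ_ne h (Fin.mk_le_mk.2 (by omega)) hne
        (show i ≤ j from Fin.le_def.2 (by simp [j]; omega))]
      exact hw i (by omega)
    intro i hi
    rw [Walk.length_cons] at hi
    exact ih hw' (by omega) (by omega) i (by omega)

lemma hm_apply_eq_of_walk_of_typAlternatesFrom {x y : Fin n → Fin N} {k M : ℕ} (hkM : k + M ≤ n)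
    (hx : TypAlternatesFrom typ k x) (hy : TypAlternatesFrom typ k y)
    (p : (HM N G typ n).Walk x y) (hp : p.length + 2 ≤ 2 * M) (i : Fin n) (hi : (i : ℕ) < k) :
    x i = y i := by
  have h₁ := hm_walk_apply_eq_of_typAlternatesFrom hx (p.take (M - 1)) (fun _ _ => rfl)
    (by simp; omega) le_rfl i (by simp; omega)
  have h₂ := hm_walk_apply_eq_of_typAlternatesFrom hy (p.drop (M - 1)).reverse (fun _ _ => rfl)
    (by simp; omega) le_rfl i (by simp; omega)
  exact h₁.symm.trans h₂

def extendAlternating {k : ℕ} (M : ℕ) (a b : Fin N) (c : Fin k → Fin N) :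
    Fin (k + M) → Fin N :=
  fun i => if h : (i : ℕ) < k then c ⟨i, h⟩ else if Even (i : ℕ) then a else b

lemma typAlternatesFrom_extendAlternating {k M : ℕ} {a b : Fin N} (hab : typ a ≠ typ b)
    (c : Fin k → Fin N) : TypAlternatesFrom typ k (extendAlternating M a b c) := by
  intro i j hi hj
  have hik : ¬(i : ℕ) < k := by omega
  have hjk : ¬(j : ℕ) < k := by omega
  rw [extendAlternating, extendAlternating, dif_neg hik, dif_neg hjk, hj]
  by_cases he : Even (i : ℕ) <;> simp [he, Nat.even_add_one, hab, Ne.symm hab]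

lemma pow_le_coveringNumber_hm {k M ℓ : ℕ} {a b : Fin N} (hab : typ a ≠ typ b)
    (hℓ : ℓ + 1 ≤ 2 * M) : N ^ k ≤ coveringNumber (HM N G typ (k + M)) ℓ := by
  simpa using card_le_coveringNumber (H := HM N G typ (k + M)) (extendAlternating M a b)
    fun c c' p hp => funext fun i => by
      simpa [extendAlternating] using hm_apply_eq_of_walk_of_typAlternatesFrom le_rfl
        (typAlternatesFrom_extendAlternating hab c) (typAlternatesFrom_extendAlternating hab c')
        p (by omega) (Fin.castAdd M i) (by simp)

lemma hm_exists_walk_to_typ_const (hbip : ∀ a b, G.Adj a b → typ a ≠ typ b)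
    (hnb : ∀ a, ∃ b, G.Adj a b) {k : ℕ} (hk : k < n) {w : Fin n → Fin N} {t : Bool}
    (hw : ∀ i : Fin n, k ≤ (i : ℕ) → typ (w i) = t) :
    ∃ (w' : Fin n → Fin N) (t' : Bool), (∀ i, typ (w' i) = t') ∧
      ∃ p : (HM N G typ n).Walk w w', p.length ≤ k := by
  induction k generalizing w t with
  | zero => exact ⟨w, t, fun i => hw i (Nat.zero_le _), .nil, le_rfl⟩
  | succ k ih =>
    by_cases hwk : typ (w ⟨k, by omega⟩) = t
    · have hw' : ∀ i : Fin n, k ≤ (i : ℕ) → typ (w i) = t := by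
        intro i hi
        rcases hi.eq_or_lt with hik | hik
        · rwa [show i = ⟨k, by omega⟩ from Fin.ext hik.symm]
        · exact hw i hik
      obtain ⟨w', t', hw', p, hp⟩ := ih (by omega) hw'
      exact ⟨w', t', hw', p, by omega⟩
    · choose nb hnb using hnb
      let w₁ : Fin n → Fin N := fun i => if k < (i : ℕ) then nb (w i) else w i
      have hadj : (HM N G typ n).Adj w w₁ := by
        refine hm_adj_of_suffix hbip ⟨k + 1, hk⟩ (fun i hi => ?_) (fun i hi => hw i hi)
          fun i hi => ?_
        · have hik : ¬k < (i : ℕ) := by rw [Fin.lt_def] at hi; simp at hi; omega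
          simp [w₁, hik]
        · have hik : k < (i : ℕ) := by rw [Fin.le_def] at hi; simp at hi; omega
          simpa [w₁, hik] using hnb (w i)
      have hw₁ : ∀ i : Fin n, k ≤ (i : ℕ) → typ (w₁ i) = !t := by
        intro i hi
        rw [Bool.eq_not_iff]
        rcases hi.eq_or_lt with hik | hik
        · simpa [w₁, ← hik, show i = ⟨k, by omega⟩ from Fin.ext hik.symm] using hwk
        · simpa [w₁, hik, ← hw i hik] using (hbip _ _ (hnb (w i))).symm
      obtain ⟨w', t', hw', p, hp⟩ := ih (by omega) hw₁
      exact ⟨w', t', hw', .cons hadj p, by simp; omega⟩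

lemma hm_exists_walk_of_typ_const (hconn : G.Connected) (hbip : ∀ a b, G.Adj a b → typ a ≠ typ b)
    [Nontrivial (Fin N)] (hn : 0 < n) {u v : Fin n → Fin N} {tu tv : Bool}
    (hu : ∀ i, typ (u i) = tu) (hv : ∀ i, typ (v i) = tv) :
    ∃ p : (HM N G typ n).Walk u v, p.length ≤ N + 1 := by
  let c : G.Coloring Bool := Coloring.mk typ fun h => hbip _ _ h
  have hc : ∀ a, c a = typ a := fun _ => rfl
  obtain ⟨L, hNL, hLN, hL⟩ := exists_le_le_add_one_even_iff N (tu = tv)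
  have hwalk : ∀ i, ∃ P : G.Walk (u i) (v i), P.length = L := by
    intro i
    obtain ⟨p, hp, -⟩ := hconn.exists_path_of_dist (u i) (v i)
    have hlt : p.length < N := by simpa using hp.length_lt
    obtain ⟨a, ha⟩ := hconn.preconnected.exists_adj_of_nontrivial (u i)
    refine p.exists_length_eq_of_even_sub ha (hlt.le.trans hNL) ?_
    have hpar : Even p.length ↔ (tu = true ↔ tv = true) := by
      simpa only [hc, hu, hv] using c.even_length_iff_congr p
    rw [Nat.even_sub (hlt.le.trans hNL), hL, hpar]
    cases tu <;> cases tv <;> simp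
  choose P hP using hwalk
  let g : ℕ → Fin n → Fin N := fun j i => (P i).getVert j
  have htyp : ∀ j ≤ L, ∀ i i', typ (g j i) = typ (g j i') := by
    intro j hj i i'
    have h := c.even_length_iff_congr ((P i).take j)
    have h' := c.even_length_iff_congr ((P i').take j)
    simp only [Walk.take_length, hP, min_eq_left hj, hc, hu] at h h'
    rw [Bool.eq_iff_iff]
    tauto
  have hadj : ∀ j < L, (HM N G typ n).Adj (g j) (g (j + 1)) := fun j hj =>
    hm_adj_of_suffix hbip ⟨0, hn⟩ (fun i hi => by simp [Fin.lt_def] at hi)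
      (fun i _ => htyp j hj.le i ⟨0, hn⟩)
      fun i _ => (P i).adj_getVert_succ (by rw [hP]; exact hj)
  obtain ⟨p, hp⟩ := exists_walk_of_adj_succ g L hadj
  refine ⟨p.copy (funext fun i => (P i).getVert_zero)
    (funext fun i => show (P i).getVert L = v i by rw [← hP i, Walk.getVert_length]), ?_⟩
  simpa [hp]

lemma hm_exists_walk_length_le (hconn : G.Connected) (hbip : ∀ a b, G.Adj a b → typ a ≠ typ b)
    [Nontrivial (Fin N)] (u v : Fin n → Fin N) :
    ∃ p : (HM N G typ n).Walk u v, p.length ≤ 2 * n + N - 1 := by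
  rcases Nat.eq_zero_or_pos n with rfl | hn
  · exact ⟨Walk.nil.copy rfl (Subsingleton.elim u v), by simp⟩
  have hnb := hconn.preconnected.exists_adj_of_nontrivial
  let last : Fin n := ⟨n - 1, by omega⟩
  have hlast : ∀ (w : Fin n → Fin N) (i : Fin n), n - 1 ≤ (i : ℕ) → typ (w i) = typ (w last) :=
    fun w i hi => by rw [show i = last from Fin.ext (by simp [last]; omega)]
  obtain ⟨u', tu, hu', p₁, hp₁⟩ := hm_exists_walk_to_typ_const hbip hnb (by omega) (hlast u)
  obtain ⟨v', tv, hv', p₂, hp₂⟩ := hm_exists_walk_to_typ_const hbip hnb (by omega) (hlast v)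
  obtain ⟨p, hp⟩ := hm_exists_walk_of_typ_const hconn hbip hn hu' hv'
  exact ⟨(p₁.append p).append p₂.reverse, by simp; omega⟩

lemma coveringNumber_hm_le_one (hconn : G.Connected) (hbip : ∀ a b, G.Adj a b → typ a ≠ typ b)
    [Nontrivial (Fin N)] {ℓ : ℕ} (hℓ : 2 * n + N ≤ ℓ) : coveringNumber (HM N G typ n) ℓ ≤ 1 :=
  coveringNumber_le_one fun u v =>
    (hm_exists_walk_length_le hconn hbip u v).imp fun _ hp => hp.trans (by omega)

lemma antitone_log_coveringNumber_hm_div_pow [NeZero N] (ℓ : ℕ) :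
    Antitone fun n => Real.log ((coveringNumber (HM N G typ n) ℓ : ℝ) / (N : ℝ) ^ n) := by
  have hN : (0 : ℝ) < N := by exact_mod_cast NeZero.pos N
  refine antitone_nat_of_succ_le fun n => Real.log_le_log ?_ ?_
  · exact div_pos (by exact_mod_cast one_le_coveringNumber) (pow_pos hN _)
  have h : (coveringNumber (HM N G typ (n + 1)) ℓ : ℝ) ≤ N * coveringNumber (HM N G typ n) ℓ := by
    exact_mod_cast coveringNumber_hm_succ_le ℓ
  calc _ ≤ (N * coveringNumber (HM N G typ n) ℓ : ℝ) / (N : ℝ) ^ (n + 1) := by gcongr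
    _ = _ := by rw [pow_succ]; field_simp

lemma neg_le_log_coveringNumber_hm_div_pow {a b : Fin N} (hab : typ a ≠ typ b) {ℓ : ℕ}
    (hn : ℓ / 2 + 1 ≤ n) :
    -(Real.log N / 2 * ℓ + Real.log N) ≤
      Real.log ((coveringNumber (HM N G typ n) ℓ : ℝ) / (N : ℝ) ^ n) := by
  set M := ℓ / 2 + 1
  obtain ⟨k, rfl⟩ : ∃ k, n = k + M := ⟨n - M, by omega⟩
  have hN : (0 : ℝ) < N := by exact_mod_cast a.pos
  have hcov : ((N : ℝ) ^ k) ≤ coveringNumber (HM N G typ (k + M)) ℓ := by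
    exact_mod_cast pow_le_coveringNumber_hm hab (by omega)
  have hM : (M : ℝ) ≤ ℓ / 2 + 1 := by
    have : 2 * M ≤ ℓ + 2 := by omega
    have : (2 * M : ℝ) ≤ ℓ + 2 := by exact_mod_cast this
    linarith
  calc -(Real.log N / 2 * ℓ + Real.log N) ≤ -(M * Real.log N) := by
        nlinarith [Real.log_natCast_nonneg N]
    _ = Real.log ((N : ℝ) ^ k / (N : ℝ) ^ (k + M)) := by
        rw [pow_add, div_mul_cancel_left₀ (by positivity), Real.log_inv, Real.log_pow]
    _ ≤ _ := Real.log_le_log (by positivity) (by gcongr)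

lemma exists_log_coveringNumber_hm_div_pow_le (hconn : G.Connected)
    (hbip : ∀ a b, G.Adj a b → typ a ≠ typ b) [Nontrivial (Fin N)] {ℓ : ℕ} (hℓ : N ≤ ℓ) :
    ∃ n, Real.log ((coveringNumber (HM N G typ n) ℓ : ℝ) / (N : ℝ) ^ n) ≤
      -(Real.log N / 2 * ℓ - (N + 1) * Real.log N) := by
  set n := (ℓ - N) / 2
  have hN : (0 : ℝ) < N := by exact_mod_cast Fin.pos (Classical.arbitrary (Fin N))
  have hcov : (coveringNumber (HM N G typ n) ℓ : ℝ) ≤ 1 := by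
    exact_mod_cast coveringNumber_hm_le_one hconn hbip (by omega)
  have hn : (ℓ : ℝ) ≤ 2 * n + N + 1 := by
    have : ℓ ≤ 2 * n + N + 1 := by omega
    exact_mod_cast this
  refine ⟨n, ?_⟩
  calc Real.log ((coveringNumber (HM N G typ n) ℓ : ℝ) / (N : ℝ) ^ n)
      ≤ Real.log (1 / (N : ℝ) ^ n) :=
        Real.log_le_log (div_pos (by exact_mod_cast one_le_coveringNumber) (by positivity))
          (by gcongr)
    _ = -(n * Real.log N) := by rw [one_div, Real.log_inv, Real.log_pow]
    _ ≤ _ := by nlinarith [Real.log_natCast_nonneg N]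

end HierarchicalModel

/-- The transfinite fractal dimension of the hierarchical graph
sequence `{HM_n}` exists (as an iterated limit, first `n → ∞`, then `ℓ → ∞`) and
equals `(log N)/2`.  Here `|HM_n| = N^n`. -/
theorem hm_transfinite_dimension (N : ℕ) (G : SimpleGraph (Fin N)) (typ : Fin N → Bool)
    (hconn : G.Connected)
    (hbip : ∀ x y : Fin N, G.Adj x y → typ x ≠ typ y)
    (hV1 : ∃ x, typ x = true) (hV2 : ∃ x, typ x = false) :
    ∃ L : ℕ → ℝ,
      (∀ ℓ : ℕ, Tendsto (fun n : ℕ =>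
          Real.log ((coveringNumber (HM N G typ n) ℓ : ℝ) / (N : ℝ) ^ n) / (-(ℓ : ℝ)))
        atTop (nhds (L ℓ))) ∧
      Tendsto L atTop (nhds (Real.log N / 2)) := by
  obtain ⟨a, ha⟩ := hV1
  obtain ⟨b, hb⟩ := hV2
  have hab : typ a ≠ typ b := by simp [ha, hb]
  have : Nontrivial (Fin N) := ⟨a, b, fun h => hab (congrArg typ h)⟩
  have : NeZero N := ⟨a.pos.ne'⟩
  exact exists_tendsto_div_neg_of_antitone antitone_log_coveringNumber_hm_div_pow
    (fun ℓ => eventually_atTop.2 ⟨_, fun n => neg_le_log_coveringNumber_hm_div_pow hab⟩)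
    (eventually_atTop.2 ⟨N, fun ℓ => exists_log_coveringNumber_hm_div_pow_le hconn hbip⟩)
end

section
/- In the Song–Havlin–Makse model with parameter p = 1, the diameter satisfies diam(SHM¹_{n+1}) = diam(SHM¹_n) + 2 for every n, hence diam(SHM¹_n) = diam(SHM_0) + 2n; in particular diam(SHM¹_n) = Θ(n). -/
open Filter Finset

/-- One growth step of the Song–Havlin–Makse model with `p = 1` (Mode I only):
every old edge is kept and every old vertex `v` receives `m · deg(v)` new pendant
(leaf) neighbours. -/
def shmStep {V : Type} (m : ℕ) (G : SimpleGraph V) :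
    SimpleGraph (V ⊕ (Σ v : V, Fin (m * (G.neighborSet v).ncard))) :=
  SimpleGraph.fromRel (fun a b =>
    match a, b with
    | Sum.inl u, Sum.inl v => G.Adj u v
    | Sum.inl u, Sum.inr w => u = w.1
    | _, _ => False)

/-- The Song–Havlin–Makse graph sequence with `p = 1` (Mode I only), started from the
graph `G0`: `(SHM m V0 G0 n).2` is the graph at time `n`, on vertex type
`(SHM m V0 G0 n).1`. -/
def SHM (m : ℕ) (V0 : Type) (G0 : SimpleGraph V0) : (n : ℕ) → Σ V : Type, SimpleGraph V
  | 0 => ⟨V0, G0⟩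
  | n + 1 => ⟨_, shmStep m (SHM m V0 G0 n).2⟩

/-!
Every vertex of the new graph is an old vertex or a leaf hanging on one. Collapsing each leaf
onto its anchor is 1-Lipschitz, so the old graph sits isometrically inside the new one, and a
path leaving a leaf must pass through its anchor; hence the distance between distinct vertices
grows by exactly the number of endpoints that are new leaves. As every old vertex receives a
leaf, two leaves hanging at the ends of a diametral pair realise the new diameter `diam + 2`.
-/

namespace SimpleGraph

variable {V W : Type*} {G : SimpleGraph V} {H : SimpleGraph W}

lemma edist_map_le_of_adj_imp_eq_or_adj (f : V → W)
    (hf : ∀ ⦃a b⦄, G.Adj a b → f a = f b ∨ H.Adj (f a) (f b)) (a b : V) :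
    H.edist (f a) (f b) ≤ G.edist a b := by
  have hwalk : ∀ {a b : V} (p : G.Walk a b), H.edist (f a) (f b) ≤ p.length := by
    intro a b p
    induction p with
    | nil => simp
    | cons h q ih =>
      calc H.edist (f _) (f _)
          ≤ H.edist (f _) (f _) + H.edist (f _) (f _) := SimpleGraph.edist_triangle
        _ ≤ 1 + q.length := add_le_add (edist_le_one_iff_adj_or_eq.2 (hf h).symm) ih
        _ = (Walk.cons h q).length := by rw [Walk.length_cons, Nat.cast_succ, add_comm]
  rcases eq_or_ne (G.edist a b) ⊤ with h | h
  · simp [h]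
  · obtain ⟨p, hp⟩ := exists_walk_of_edist_ne_top h
    exact hp ▸ hwalk p

lemma edist_eq_edist_add_one_of_neighborSet_eq_singleton {x y a : V}
    (hx : G.neighborSet x = {y}) (ha : a ≠ x) : G.edist x a = G.edist y a + 1 := by
  have hxy : G.Adj x y := by simp [← mem_neighborSet, hx]
  refine le_antisymm ?_ ?_
  · calc G.edist x a ≤ G.edist x y + G.edist y a := SimpleGraph.edist_triangle
      _ = G.edist y a + 1 := by rw [edist_eq_one_iff_adj.2 hxy, add_comm]
  · conv_rhs => rw [edist_eq_sInf]
    refine le_sInf ?_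
    rintro _ ⟨p, rfl⟩
    cases p with
    | nil => exact absurd rfl ha
    | cons h q =>
      obtain rfl : _ = y := by simpa [← mem_neighborSet, hx] using h
      simpa using add_le_add_left (edist_le q) 1

end SimpleGraph

section shmStep

open SimpleGraph

variable {V : Type} {m : ℕ} {G : SimpleGraph V} {u v : V}
  {w w' : Σ v : V, Fin (m * (G.neighborSet v).ncard)}
  {a b : V ⊕ (Σ v : V, Fin (m * (G.neighborSet v).ncard))}

def shmRetract (m : ℕ) (G : SimpleGraph V) :
    V ⊕ (Σ v : V, Fin (m * (G.neighborSet v).ncard)) → V :=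
  Sum.elim id Sigma.fst

lemma shmStep_adj_inl_inl : (shmStep m G).Adj (.inl u) (.inl v) ↔ G.Adj u v := by
  rw [shmStep, fromRel_adj]
  exact ⟨fun h => h.2.elim id Adj.symm, fun h => ⟨by simpa using h.ne, .inl h⟩⟩

lemma shmStep_adj_inr : (shmStep m G).Adj a (.inr w) ↔ a = .inl w.1 := by
  cases a <;> simp [shmStep, eq_comm]

lemma neighborSet_shmStep_inr : (shmStep m G).neighborSet (.inr w) = {.inl w.1} :=
  Set.ext fun _ => ((shmStep m G).adj_comm _ _).trans shmStep_adj_inr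

lemma shmRetract_eq_or_adj (h : (shmStep m G).Adj a b) :
    shmRetract m G a = shmRetract m G b ∨ G.Adj (shmRetract m G a) (shmRetract m G b) := by
  rcases a with u | w <;> rcases b with v | w'
  · exact .inr (shmStep_adj_inl_inl.1 h)
  · exact .inl (Sum.inl_injective (shmStep_adj_inr.1 h))
  · exact .inl (Sum.inl_injective (shmStep_adj_inr.1 h.symm)).symm
  · exact absurd (shmStep_adj_inr.1 h) Sum.inr_ne_inl

lemma shmStep_edist_inl_inl : (shmStep m G).edist (.inl u) (.inl v) = G.edist u v :=
  le_antisymm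
    (edist_map_le_of_adj_imp_eq_or_adj Sum.inl (fun _ _ h => .inr (shmStep_adj_inl_inl.2 h)) u v)
    (edist_map_le_of_adj_imp_eq_or_adj (shmRetract m G) (fun _ _ => shmRetract_eq_or_adj) _ _)

lemma shmStep_edist_inr_inl : (shmStep m G).edist (.inr w) (.inl v) = G.edist w.1 v + 1 := by
  rw [edist_eq_edist_add_one_of_neighborSet_eq_singleton neighborSet_shmStep_inr Sum.inl_ne_inr,
    shmStep_edist_inl_inl]

lemma shmStep_edist_inr_inr (h : w ≠ w') :
    (shmStep m G).edist (.inr w) (.inr w') = G.edist w.1 w'.1 + 2 := by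
  rw [edist_eq_edist_add_one_of_neighborSet_eq_singleton neighborSet_shmStep_inr
    (Sum.inr_injective.ne h.symm), edist_comm, shmStep_edist_inr_inl, edist_comm, add_assoc]
  rfl

lemma shmStep_edist_le :
    (shmStep m G).edist a b ≤ G.edist (shmRetract m G a) (shmRetract m G b) + 2 := by
  rcases a with u | w <;> rcases b with v | w'
  · simp [shmRetract, shmStep_edist_inl_inl]
  · rw [edist_comm, shmStep_edist_inr_inl, edist_comm]
    exact add_le_add le_rfl (by norm_num)
  · rw [shmStep_edist_inr_inl]
    exact add_le_add le_rfl (by norm_num)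
  · rcases eq_or_ne w w' with rfl | h
    · simp
    · exact (shmStep_edist_inr_inr h).le

lemma ediam_shmStep [Nonempty V] (hleaf : ∀ v, 0 < m * (G.neighborSet v).ncard) :
    (shmStep m G).ediam = G.ediam + 2 := by
  refine le_antisymm (ediam_le_of_edist_le fun a b => shmStep_edist_le.trans ?_) ?_
  · gcongr; exact edist_le_ediam
  rw [ediam_def, ENat.iSup_add]
  refine iSup_le fun ⟨u, v⟩ => ?_
  rcases eq_or_ne u v with rfl | h
  · obtain ⟨x, hx⟩ := Set.nonempty_of_ncard_ne_zero (Nat.pos_of_mul_pos_left (hleaf u)).ne'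
    calc G.edist u u + 2 = (shmStep m G).edist (.inr ⟨u, 0, hleaf u⟩) (.inl x) := by
          rw [shmStep_edist_inr_inl, SimpleGraph.edist_self, edist_eq_one_iff_adj.2 hx]; rfl
      _ ≤ _ := edist_le_ediam
  · calc G.edist u v + 2
          = (shmStep m G).edist (.inr ⟨u, 0, hleaf u⟩) (.inr ⟨v, 0, hleaf v⟩) :=
          by rw [shmStep_edist_inr_inr fun e => h (congrArg Sigma.fst e)]
      _ ≤ _ := edist_le_ediam

lemma shmStep_exists_adj (h : ∀ v, ∃ u, G.Adj v u) (a) : ∃ b, (shmStep m G).Adj a b := by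
  rcases a with v | w
  · obtain ⟨u, hu⟩ := h v
    exact ⟨.inl u, shmStep_adj_inl_inl.2 hu⟩
  · exact ⟨.inl w.1, ((shmStep m G).adj_comm _ _).1 (shmStep_adj_inr.2 rfl)⟩

end shmStep

section SHM

open SimpleGraph

variable {m : ℕ} {V0 : Type} {G0 : SimpleGraph V0}

lemma finite_SHM [Finite V0] : ∀ n, Finite (SHM m V0 G0 n).1
  | 0 => ‹_›
  | n + 1 => have := finite_SHM n; inferInstanceAs (Finite (_ ⊕ _))

lemma nonempty_SHM [Nonempty V0] : ∀ n, Nonempty (SHM m V0 G0 n).1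
  | 0 => ‹_›
  | n + 1 => have := nonempty_SHM n; inferInstanceAs (Nonempty (_ ⊕ _))

lemma SHM_exists_adj (h0 : ∀ v, ∃ u, G0.Adj v u) :
    ∀ n (v : (SHM m V0 G0 n).1), ∃ u, (SHM m V0 G0 n).2.Adj v u
  | 0 => h0
  | n + 1 => shmStep_exists_adj (SHM_exists_adj h0 n)

lemma ediam_SHM [Finite V0] [Nonempty V0] (hm : 1 ≤ m) (h0 : ∀ v, ∃ u, G0.Adj v u) :
    ∀ n, (SHM m V0 G0 n).2.ediam = G0.ediam + 2 * n
  | 0 => by simp [SHM]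
  | n + 1 => by
    have := finite_SHM (m := m) (G0 := G0) n
    have := nonempty_SHM (m := m) (G0 := G0) n
    have hleaf (v : (SHM m V0 G0 n).1) : 0 < m * ((SHM m V0 G0 n).2.neighborSet v).ncard :=
      Nat.mul_pos hm ((Set.ncard_pos).2 (SHM_exists_adj h0 n v))
    rw [SHM, ediam_shmStep hleaf, ediam_SHM hm h0 n]
    push_cast
    ring

end SHM

/-- In the SHM model with `p = 1` (and `m ≥ 1`, started from a
connected graph with at least one edge), the diameter increases by exactly `2` at
every step; hence `diam(SHM¹_n) = diam(SHM_0) + 2n`, and in particular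
`diam(SHM¹_n) = Θ(n)`. -/
theorem shm_diam (m : ℕ) (hm : 1 ≤ m) (V0 : Type) [Fintype V0]
    (G0 : SimpleGraph V0) (hconn : G0.Connected) (hE : G0.edgeSet.Nonempty) :
    (∀ n : ℕ, (SHM m V0 G0 (n + 1)).2.diam = (SHM m V0 G0 n).2.diam + 2) ∧
    (∀ n : ℕ, (SHM m V0 G0 n).2.diam = G0.diam + 2 * n) := by
  have := hconn.nonempty
  obtain ⟨a, b, hab⟩ := SimpleGraph.ne_bot_iff_exists_adj.1 (SimpleGraph.edgeSet_nonempty.1 hE)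
  have := hab.nontrivial
  have h0 := hconn.preconnected.exists_adj_of_nontrivial
  have hfin : G0.ediam ≠ ⊤ := SimpleGraph.connected_iff_ediam_ne_top.1 hconn
  have hdiam (n : ℕ) : (SHM m V0 G0 n).2.diam = G0.diam + 2 * n := by
    rw [SimpleGraph.diam, ediam_SHM hm h0,
      ENat.toNat_add hfin (mod_cast ENat.natCast_ne_top (2 * n))]
    simp [SimpleGraph.diam]
  exact ⟨fun n => by rw [hdiam, hdiam]; ring, hdiam⟩
end

section
/- Let T_n be a rooted tree of height n in which every vertex not in generation n has at least one child, and let L_i denote the number of vertices at graph distance i from the root. Then for every k ≤ n, the minimum number N_B^n(2k+1) of (2k+1)-boxes needed to cover T_n satisfies L_{n−k} ≤ N_B^n(2k+1) ≤ Σ_{i=0}^{n−k} L_i. -/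
/-!
Upper bound: the descendants of a vertex `v` within depth `k` form a `(2k+1)`-box, since any two
of them are joined through `v`; the balls of the vertices of level at most `n - k` cover the tree,
because every deeper vertex lies within `k` below its ancestor at level `n - k`.

Lower bound: below each vertex of level `n - k` pick a descendant of level `n`. In a tree, a path
between two such descendants with different ancestors at level `n - k` must climb above that
level, so they are more than `2k` apart and no `(2k+1)`-box contains two of them.
-/

open Filter Finset

lemma Finset.card_filter_le_eq_sum_card_filter_eq {α : Type*} [Fintype α] (f : α → ℕ) (m : ℕ) :
    #{a | f a ≤ m} = ∑ i ∈ range (m + 1), #{a | f a = i} := by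
  rw [card_eq_sum_card_fiberwise (f := f) (t := range (m + 1)) fun a ha ↦ by simp_all]
  refine sum_congr rfl fun i hi ↦ ?_
  rw [filter_filter]
  refine congrArg card (filter_congr fun a _ ↦ ?_)
  simp only [mem_range] at hi
  constructor <;> omega

namespace SimpleGraph

variable {V : Type*} {G : SimpleGraph V}

namespace Walk

variable {u v z z' : V} {p : G.Walk u v}

lemma dist_getVert_of_length_eq_dist (hp : p.length = G.dist u v) {i : ℕ} (hi : i ≤ p.length) :
    G.dist u (p.getVert i) = i ∧ G.dist (p.getVert i) v = p.length - i := by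
  have htake := dist_le (p.take i)
  have hdrop := dist_le (p.drop i)
  have htri := (p.drop i).reachable.dist_triangle_right u
  rw [take_length] at htake
  rw [drop_length] at hdrop
  omega

lemma dist_add_dist_of_mem_support (hp : p.length = G.dist u v) (hz : z ∈ p.support) :
    G.dist u z + G.dist z v = G.dist u v := by
  obtain ⟨i, rfl, hi⟩ := mem_support_iff_exists_getVert.mp hz
  have := dist_getVert_of_length_eq_dist hp hi
  omega

lemma eq_of_mem_support_of_dist_eq (hp : p.length = G.dist u v) (hz : z ∈ p.support)
    (hz' : z' ∈ p.support) (h : G.dist u z = G.dist u z') : z = z' := by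
  obtain ⟨i, rfl, hi⟩ := mem_support_iff_exists_getVert.mp hz
  obtain ⟨j, rfl, hj⟩ := mem_support_iff_exists_getVert.mp hz'
  rw [(dist_getVert_of_length_eq_dist hp hi).1, (dist_getVert_of_length_eq_dist hp hj).1] at h
  rw [h]

end Walk

/-- `a` lies on a shortest walk from `ρ` to `v`; for a tree rooted at `ρ`, `a` is an ancestor
of `v`. -/
def IsAncestor (G : SimpleGraph V) (ρ a v : V) : Prop :=
  G.dist ρ a + G.dist a v = G.dist ρ v

variable {ρ a a' v w w' x y : V}

lemma isAncestor_refl (ρ v : V) : G.IsAncestor ρ v v := by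
  simp [IsAncestor]

lemma Reachable.exists_isAncestor (h : G.Reachable ρ v) {m : ℕ} (hm : m ≤ G.dist ρ v) :
    ∃ a, G.dist ρ a = m ∧ G.IsAncestor ρ a v := by
  obtain ⟨p, hp⟩ := h.exists_walk_length_eq_dist
  have := p.dist_getVert_of_length_eq_dist hp (i := m) (by omega)
  exact ⟨p.getVert m, this.1, by unfold IsAncestor; omega⟩

lemma IsAncestor.of_adj (hG : G.Connected) (ha : G.IsAncestor ρ a x) (hxy : G.Adj x y)
    (hy : G.dist ρ y = G.dist ρ x + 1) : G.IsAncestor ρ a y := by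
  have h₁ : G.dist a y ≤ G.dist a x + G.dist x y := hG.dist_triangle
  have h₂ : G.dist ρ y ≤ G.dist ρ a + G.dist a y := hG.dist_triangle
  rw [dist_eq_one_iff_adj.mpr hxy] at h₁
  unfold IsAncestor at *
  omega

lemma IsTree.eq_of_isAncestor (hG : G.IsTree) (ha : G.IsAncestor ρ a v)
    (ha' : G.IsAncestor ρ a' v) (h : G.dist ρ a = G.dist ρ a') : a = a' := by
  obtain ⟨p, hp⟩ := hG.connected.exists_walk_length_eq_dist ρ a
  obtain ⟨q, hq⟩ := hG.connected.exists_walk_length_eq_dist a v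
  obtain ⟨p', hp'⟩ := hG.connected.exists_walk_length_eq_dist ρ a'
  obtain ⟨q', hq'⟩ := hG.connected.exists_walk_length_eq_dist a' v
  have hpq : (p.append q).length = G.dist ρ v := by rw [Walk.length_append, hp, hq, ha]
  have hpq' : (p'.append q').length = G.dist ρ v := by rw [Walk.length_append, hp', hq', ha']
  have heq : p.append q = p'.append q' := (hG.existsUnique_path ρ v).unique
    (Walk.isPath_of_length_eq_dist _ hpq) (Walk.isPath_of_length_eq_dist _ hpq')
  refine Walk.eq_of_mem_support_of_dist_eq hpq ?_ ?_ h
  · exact (Walk.mem_support_append_iff _ _).mpr (.inl p.end_mem_support)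
  · exact heq ▸ (Walk.mem_support_append_iff _ _).mpr (.inl p'.end_mem_support)

lemma IsTree.isAncestor_of_adj (hG : G.IsTree) (ha : G.IsAncestor ρ a x) (hxy : G.Adj x y)
    (hay : G.dist ρ a ≤ G.dist ρ y) : G.IsAncestor ρ a y := by
  rcases hG.dist_eq_dist_add_one_of_adj ρ hxy with hx | hy
  · -- `y` is the parent of `x`: its ancestor at the level of `a` is also one of `x`.
    obtain ⟨a', ha'ρ, ha'⟩ := (hG.connected ρ y).exists_isAncestor hay
    rwa [hG.eq_of_isAncestor ha (ha'.of_adj hG.connected hxy.symm hx) ha'ρ.symm]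
  · exact ha.of_adj hG.connected hxy hy

lemma IsTree.isAncestor_of_walk (hG : G.IsTree) (q : G.Walk x y)
    (hq : ∀ z ∈ q.support, G.dist ρ a ≤ G.dist ρ z) (ha : G.IsAncestor ρ a x) :
    G.IsAncestor ρ a y := by
  induction q with
  | nil => exact ha
  | cons hxy q ih =>
    exact ih (fun z hz ↦ hq z (by simp [hz])) (hG.isAncestor_of_adj ha hxy (hq _ (by simp)))

lemma IsTree.eq_of_isAncestor_of_dist_le {k : ℕ} (hG : G.IsTree) (ha : G.IsAncestor ρ a w)
    (ha' : G.IsAncestor ρ a' w') (hk : G.dist a w = k) (hk' : G.dist a' w' = k)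
    (hlevel : G.dist ρ a = G.dist ρ a') (hww' : G.dist w w' ≤ 2 * k) : a = a' := by
  -- A geodesic from `w` to `w'` never climbs above the level of `a`, and the ancestor at a
  -- fixed level is constant along walks staying below it.
  obtain ⟨q, hq⟩ := hG.connected.exists_walk_length_eq_dist w w'
  have hlow : ∀ z ∈ q.support, G.dist ρ a ≤ G.dist ρ z := by
    intro z hz
    have hsplit := q.dist_add_dist_of_mem_support hq hz
    have h₁ : G.dist ρ w ≤ G.dist ρ z + G.dist z w := hG.connected.dist_triangle
    have h₂ : G.dist ρ w' ≤ G.dist ρ z + G.dist z w' := hG.connected.dist_triangle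
    rw [dist_comm (u := z)] at h₁
    unfold IsAncestor at ha ha'
    omega
  exact hG.eq_of_isAncestor (hG.isAncestor_of_walk q hlow ha) ha' hlevel

lemma exists_isAncestor_dist_eq (hG : G.Connected) {n : ℕ}
    (hchild : ∀ v, G.dist ρ v < n → ∃ w, G.Adj v w ∧ G.dist ρ w = G.dist ρ v + 1)
    (v : V) {j : ℕ} (hj : G.dist ρ v + j ≤ n) : ∃ w, G.IsAncestor ρ v w ∧ G.dist v w = j := by
  induction j with
  | zero => exact ⟨v, isAncestor_refl ρ v, dist_self⟩
  | succ j ih =>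
    obtain ⟨w, hw, hwj⟩ := ih (by omega)
    obtain ⟨w', hww', hw'⟩ := hchild w (by unfold IsAncestor at hw; omega)
    have hvw' := hw.of_adj hG hww' hw'
    refine ⟨w', hvw', ?_⟩
    unfold IsAncestor at hw hvw'
    omega

lemma IsBox.dist_le {ℓ : ℕ} {B : G.Subgraph} (hB : G.IsBox ℓ B) (hv : v ∈ B.verts)
    (hw : w ∈ B.verts) : G.dist v w ≤ ℓ - 1 := by
  obtain ⟨hreach, hdist⟩ := hB ⟨v, hv⟩ ⟨w, hw⟩
  obtain ⟨p, hp⟩ := hreach.exists_walk_length_eq_dist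
  calc G.dist v w ≤ (p.map B.hom).length := SimpleGraph.dist_le _
    _ ≤ ℓ - 1 := by rwa [Walk.length_map, hp]

lemma isBox_induce_of_forall_walk {S : Set V} {k : ℕ}
    (h : ∀ x ∈ S, ∃ p : G.Walk v x, p.length ≤ k ∧ ∀ z ∈ p.support, z ∈ S) :
    G.IsBox (2 * k + 1) ((⊤ : G.Subgraph).induce S) := by
  have hlift : ∀ x (hx : x ∈ S), ∃ hv : v ∈ S,
      ∃ q : (G.induce S).Walk ⟨v, hv⟩ ⟨x, hx⟩, q.length ≤ k := by
    intro x hx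
    obtain ⟨p, hpk, hpS⟩ := h x hx
    refine ⟨hpS v p.start_mem_support, p.induce S hpS, ?_⟩
    rwa [← Walk.length_map (Embedding.induce S).toHom, Walk.map_induce]
  rintro ⟨x, hx⟩ ⟨y, hy⟩
  obtain ⟨_, qx, hqx⟩ := hlift x hx
  obtain ⟨_, qy, hqy⟩ := hlift y hy
  rw [← induce_eq_coe_induce_top]
  refine ⟨(qx.reverse.append qy).reachable, ?_⟩
  calc (G.induce S).dist ⟨x, hx⟩ ⟨y, hy⟩ ≤ (qx.reverse.append qy).length := SimpleGraph.dist_le _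
    _ ≤ 2 * k + 1 - 1 := by simp only [Walk.length_append, Walk.length_reverse]; omega

def IsBoxCover (G : SimpleGraph V) (ℓ : ℕ) (F : Finset G.Subgraph) : Prop :=
  (∀ B ∈ F, G.IsBox ℓ B) ∧ ∀ v, ∃ B ∈ F, v ∈ B.verts

section Cover

variable {ℓ : ℕ} {F : Finset G.Subgraph}

lemma coveringNumber_le_card (hF : G.IsBoxCover ℓ F) : coveringNumber G ℓ ≤ #F :=
  Nat.sInf_le ⟨F, rfl, hF⟩

-- The cover `F` excludes the junk value `sInf ∅ = 0`.
lemma le_coveringNumber {m : ℕ} (hF : G.IsBoxCover ℓ F)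
    (h : ∀ F', G.IsBoxCover ℓ F' → m ≤ #F') : m ≤ coveringNumber G ℓ :=
  le_csInf ⟨_, F, rfl, hF⟩ fun _ ⟨F', hm, hF'⟩ ↦ hm ▸ h F' hF'

lemma IsBoxCover.card_le {ι : Type*} {s : Finset ι} {f : ι → V} (hF : G.IsBoxCover ℓ F)
    (hs : ∀ i ∈ s, ∀ j ∈ s, G.dist (f i) (f j) ≤ ℓ - 1 → i = j) : #s ≤ #F := by
  choose B hBF hB using hF.2
  refine card_le_card_of_injOn (B ∘ f) (fun i _ ↦ hBF (f i)) fun i hi j hj hij ↦ ?_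
  replace hij : B (f i) = B (f j) := hij
  exact hs i hi j hj ((hF.1 _ (hBF (f i))).dist_le (hB (f i)) (hij ▸ hB (f j)))

end Cover

def descendantBall (G : SimpleGraph V) (ρ v : V) (k : ℕ) : Set V :=
  {w | G.IsAncestor ρ v w ∧ G.dist v w ≤ k}

lemma isBox_induce_descendantBall (hG : G.Connected) (ρ v : V) (k : ℕ) :
    G.IsBox (2 * k + 1) ((⊤ : G.Subgraph).induce (G.descendantBall ρ v k)) := by
  refine isBox_induce_of_forall_walk (v := v) fun x ⟨hvx, hxk⟩ ↦ ?_
  obtain ⟨p, hp⟩ := hG.exists_walk_length_eq_dist v x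
  refine ⟨p, hp ▸ hxk, fun z hz ↦ ?_⟩
  have hsplit := p.dist_add_dist_of_mem_support hp hz
  have h₁ : G.dist ρ z ≤ G.dist ρ v + G.dist v z := hG.dist_triangle
  have h₂ : G.dist ρ x ≤ G.dist ρ z + G.dist z x := hG.dist_triangle
  unfold IsAncestor at hvx
  exact ⟨by unfold IsAncestor; omega, by omega⟩

lemma exists_isBoxCover_card_le [Fintype V] (hG : G.Connected) {ρ : V} {n : ℕ}
    (hheight : ∀ v, G.dist ρ v ≤ n) (k : ℕ) :
    ∃ F : Finset G.Subgraph, G.IsBoxCover (2 * k + 1) F ∧ #F ≤ #{v | G.dist ρ v ≤ n - k} := by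
  classical
  let ball (v : V) : G.Subgraph := (⊤ : G.Subgraph).induce (G.descendantBall ρ v k)
  refine ⟨image ball {v | G.dist ρ v ≤ n - k}, ⟨?_, fun x ↦ ?_⟩, card_image_le⟩
  · simpa using fun v _ ↦ isBox_induce_descendantBall hG ρ v k
  -- `x` lies in the ball of its ancestor at level `n - k`, or in its own ball if it is higher.
  obtain ⟨a, ha, hax⟩ := (hG ρ x).exists_isAncestor (m := min (G.dist ρ x) (n - k)) (by omega)
  have hx := hheight x
  refine ⟨ball a, mem_image_of_mem _ ?_, hax, ?_⟩
  · simp only [mem_filter, mem_univ, true_and]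
    omega
  · unfold IsAncestor at hax
    omega

lemma IsTree.card_level_le_card [Fintype V] (hG : G.IsTree) {n : ℕ}
    (hchild : ∀ v, G.dist ρ v < n → ∃ w, G.Adj v w ∧ G.dist ρ w = G.dist ρ v + 1)
    {m k : ℕ} (hmk : m + k ≤ n) {F : Finset G.Subgraph} (hF : G.IsBoxCover (2 * k + 1) F) :
    #{v | G.dist ρ v = m} ≤ #F := by
  choose! w hw hwk using fun v (hv : G.dist ρ v = m) ↦
    exists_isAncestor_dist_eq hG.connected hchild v (j := k) (by omega)
  refine hF.card_le (f := w) fun u hu v hv huv ↦ ?_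
  simp only [mem_filter, mem_univ, true_and] at hu hv
  exact hG.eq_of_isAncestor_of_dist_le (hw u hu) (hw v hv) (hwk u hu) (hwk v hv)
    (hu.trans hv.symm) (by omega)

end SimpleGraph

open SimpleGraph

/-- Let `T` be a finite rooted tree of height `n` (no vertex is at
distance more than `n` from the root `ρ`) in which every vertex at distance less than
`n` from the root has at least one child.  Writing `L i` for the number of vertices at
distance `i` from the root, for every `k ≤ n` the minimal number of `(2k+1)`-boxes
covering `T` satisfies `L (n-k) ≤ N_B^n(2k+1) ≤ Σ_{i=0}^{n-k} L i`. -/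
theorem tree_boxing_bounds {V : Type} [Fintype V] (T : SimpleGraph V)
    (htree : T.IsTree) (ρ : V) (n : ℕ)
    (hheight : ∀ v : V, T.dist ρ v ≤ n)
    (hchild : ∀ v : V, T.dist ρ v < n → ∃ w : V, T.Adj v w ∧ T.dist ρ w = T.dist ρ v + 1)
    (L : ℕ → ℕ) (hL : ∀ i, L i = Nat.card {v : V // T.dist ρ v = i})
    (k : ℕ) (hk : k ≤ n) :
    L (n - k) ≤ coveringNumber T (2 * k + 1) ∧
      coveringNumber T (2 * k + 1) ≤ ∑ i ∈ Finset.range (n - k + 1), L i := by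
  have hlevel : ∀ i, L i = #{v | T.dist ρ v = i} := fun i ↦ by
    rw [hL, Nat.card_eq_fintype_card, Fintype.card_subtype]
  obtain ⟨F, hF, hFcard⟩ := exists_isBoxCover_card_le htree.connected hheight k
  refine ⟨?_, ?_⟩
  · rw [hlevel]
    exact le_coveringNumber hF fun F' hF' ↦ htree.card_level_le_card hchild (by omega) hF'
  · calc coveringNumber T (2 * k + 1) ≤ #F := coveringNumber_le_card hF
      _ ≤ #{v | T.dist ρ v ≤ n - k} := hFcard
      _ = ∑ i ∈ range (n - k + 1), L i := by
        simp only [card_filter_le_eq_sum_card_filter_eq, hlevel]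
end

section
/- Let T_∞^d be the complete d-ary tree with d ≥ 2, and T_n its truncation at height n. Then the growth rate of T_∞^d equals d, and the transfinite fractal dimension of the sequence {T_n} exists and equals (log d)/2. -/
/-!
The vertices at depth `n` are the words of length `n` over `Fin d`, so `L_n = d ^ n`.

For the covering number, cut the depths of `T_n` into layers `(n - (j + 1) ℓ, n - j ℓ]` and put
`r = (ℓ - 1) / 2`. For every vertex `c` at depth `n - j ℓ - r`, the descendants and ancestors of
`c` inside layer `j` form an `ℓ`-box, and these boxes cover `T_n`. Conversely, extending each such
`c` to depth `n - j ℓ` gives points that are pairwise at distance at least `ℓ`, so no box contains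
two of them. Hence `N_B^n(ℓ) = ∑ j, d ^ (n - j ℓ - r)`. Divided by `|T_n|` this tends to
`d ^ (-r) (1 - d⁻¹) / (1 - d ^ (-ℓ))`, and the logarithm of that, divided by `-ℓ`, tends to
`(log d) / 2`.
-/

open Filter Finset

/-- Vertices of the spherically symmetric tree with offspring sequence `f`:
a vertex at depth `n` is a sequence of child-indices, the index chosen at depth `i`
lying in `Fin (f i)`. -/
def SSTVert (f : ℕ → ℕ) : Type := Σ n : ℕ, ∀ i : Fin n, Fin (f i)

/-- Parent-child relation of the spherically symmetric tree: `y` is a child of `x`. -/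
def SSTRel (f : ℕ → ℕ) (x y : SSTVert f) : Prop :=
  ∃ h : y.1 = x.1 + 1, ∀ i : Fin x.1, (x.2 i : ℕ) = (y.2 ⟨i.1, by omega⟩ : ℕ)

/-- The spherically symmetric tree with offspring sequence `f`, as a graph on all
vertices: every vertex at depth `h` has exactly `f h` children. -/
def SST (f : ℕ → ℕ) : SimpleGraph (SSTVert f) := SimpleGraph.fromRel (SSTRel f)

/-- The root of the spherically symmetric tree. -/
def SSTroot (f : ℕ → ℕ) : SSTVert f := ⟨0, fun i => i.elim0⟩

/-- The truncation `T_n` of the spherically symmetric tree at height `n`. -/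
def SSTtrunc (f : ℕ → ℕ) (n : ℕ) : SimpleGraph {v : SSTVert f // v.1 ≤ n} :=
  SimpleGraph.induce {v : SSTVert f | v.1 ≤ n} (SST f)

/-- `SSTgen f n` = number of vertices of the spherically symmetric tree at graph
distance `n` from the root (the size `L_n` of generation `n`). -/
noncomputable def SSTgen (f : ℕ → ℕ) (n : ℕ) : ℕ :=
  Nat.card {v : SSTVert f // (SST f).dist (SSTroot f) v = n}

namespace SSTVert

variable {f : ℕ → ℕ}

def take (x : SSTVert f) (k : ℕ) : SSTVert f :=
  ⟨min k x.1, fun i => x.2 ⟨i, i.2.trans_le (min_le_right _ _)⟩⟩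

@[simp] lemma take_fst (x : SSTVert f) (k : ℕ) : (x.take k).1 = min k x.1 := rfl

lemma ext {x y : SSTVert f} (h₁ : x.1 = y.1)
    (h₂ : ∀ i (hx : i < x.1) (hy : i < y.1), (x.2 ⟨i, hx⟩ : ℕ) = y.2 ⟨i, hy⟩) : x = y := by
  obtain ⟨n, g⟩ := x
  obtain ⟨m, h⟩ := y
  obtain rfl : n = m := h₁
  obtain rfl : g = h := funext fun i => Fin.ext (h₂ i i.2 i.2)
  rfl

lemma take_of_le {x : SSTVert f} {k : ℕ} (h : x.1 ≤ k) : x.take k = x :=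
  ext (by simp [h]) fun _ _ _ => rfl

lemma take_take {x : SSTVert f} {j k : ℕ} (h : j ≤ k) : (x.take k).take j = x.take j :=
  ext (by simp; omega) fun _ _ _ => rfl

lemma take_zero (x : SSTVert f) : x.take 0 = SSTroot f :=
  ext (by simp [SSTroot]) fun _ _ hy => absurd hy (Nat.not_lt_zero _)

lemma take_take_of_comparable {x c : SSTVert f} (hx : x.take c.1 = c.take x.1) {k : ℕ}
    (hk : k ≤ x.1) : (x.take k).take c.1 = c.take (x.take k).1 := by
  have hk' : (x.take k).1 = k := by simp; omega
  rw [hk']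
  rcases le_total c.1 k with h | h
  · rw [take_take h, hx, take_of_le (by omega), take_of_le (by omega)]
  · have := congrArg (take · k) hx
    simp only [take_take h, take_take hk] at this
    rwa [take_of_le (by simp; omega)]

lemma take_eq_of_comparable {x y c : SSTVert f} (hx : x.take c.1 = c.take x.1)
    (hy : y.take c.1 = c.take y.1) (hxy : x.1 ≤ y.1) (hxc : x.1 ≤ c.1) : y.take x.1 = x := by
  have := congrArg (take · x.1) hy
  simp only [take_take hxc, take_take hxy] at this
  rw [this, ← hx, take_of_le hxc]

end SSTVert

open SSTVert

section Walks

variable {f : ℕ → ℕ} {x y : SSTVert f}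

lemma SST_adj_iff : (SST f).Adj x y ↔ SSTRel f x y ∨ SSTRel f y x := by
  rw [SST, SimpleGraph.fromRel_adj, and_iff_right_iff_imp]
  rintro (⟨h, -⟩ | ⟨h, -⟩) rfl <;> omega

lemma SST_adj_take {k : ℕ} (h : x.1 = k + 1) : (SST f).Adj x (x.take k) :=
  SST_adj_iff.2 <| Or.inr ⟨by simp; omega, fun _ => rfl⟩

lemma SST_adj_depth (h : (SST f).Adj x y) : y.1 = x.1 + 1 ∨ x.1 = y.1 + 1 := by
  rcases SST_adj_iff.1 h with ⟨h, -⟩ | ⟨h, -⟩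
  exacts [Or.inl h, Or.inr h]

lemma SST_take_eq_of_adj (h : (SST f).Adj x y) {k : ℕ} (hx : k ≤ x.1) (hy : k ≤ y.1) :
    x.take k = y.take k := by
  have key : ∀ a b : SSTVert f, SSTRel f a b → k ≤ a.1 → a.take k = b.take k := by
    rintro a b ⟨hab, hdig⟩ hk
    exact ext (by simp; omega) fun i hi _ => hdig ⟨i, by simp at hi; omega⟩
  rcases SST_adj_iff.1 h with h | h
  exacts [key _ _ h hx, (key _ _ h hy).symm]

lemma SST_walk_depth (w : (SST f).Walk x y) :
    y.1 ≤ x.1 + w.length ∧ x.1 ≤ y.1 + w.length := by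
  induction w with
  | nil => simp
  | cons h w ih =>
    have := SST_adj_depth h
    simp only [SimpleGraph.Walk.length_cons]
    omega

/-- A walk between vertices with different ancestors at depth `k` passes through depth
`k - 1`, hence it climbs up to there from `x` and down again to `y`. -/
lemma SST_length_walk_of_take_ne {k : ℕ} (w : (SST f).Walk x y) (hx : k ≤ x.1) (hy : k ≤ y.1)
    (hne : x.take k ≠ y.take k) : x.1 + y.1 + 2 ≤ w.length + 2 * k := by
  induction w with
  | nil => exact absurd rfl hne
  | @cons a b c h w ih =>
    have := SST_adj_depth h
    simp only [SimpleGraph.Walk.length_cons]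
    by_cases hb : k ≤ b.1
    · have := ih hb hy (SST_take_eq_of_adj h hx hb ▸ hne)
      omega
    · have := SST_walk_depth w
      omega

lemma SST_exists_walk_take (x : SSTVert f) (k : ℕ) :
    ∃ w : (SST f).Walk x (x.take k), w.length = x.1 - k := by
  induction hm : x.1 - k generalizing x with
  | zero => exact ⟨SimpleGraph.Walk.nil.copy rfl (take_of_le (by omega)).symm, by simp⟩
  | succ m ih =>
    obtain ⟨w, hw⟩ := ih (x.take (k + m)) (by simp; omega)
    exact ⟨.cons (SST_adj_take (by omega)) (w.copy rfl (take_take (by omega))), by simp [hw]⟩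

lemma SST_dist_root (v : SSTVert f) : (SST f).dist (SSTroot f) v = v.1 := by
  obtain ⟨w, hw⟩ := SST_exists_walk_take v 0
  refine le_antisymm ?_ ?_
  · simpa [hw] using SimpleGraph.dist_le (w.copy rfl (take_zero v)).reverse
  · obtain ⟨p, hp⟩ := (w.copy rfl (take_zero v)).reverse.reachable.exists_walk_length_eq_dist
    rw [← hp]
    simpa [SSTroot] using (SST_walk_depth p).1

end Walks

section Counting

variable (f : ℕ → ℕ)

def SSTVert.depthEquiv (m : ℕ) : {v : SSTVert f // v.1 = m} ≃ ∀ i : Fin m, Fin (f i) where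
  toFun v i := v.1.2 ⟨i, by rw [v.2]; exact i.2⟩
  invFun g := ⟨⟨m, g⟩, rfl⟩
  left_inv v := Subtype.ext <| ext (by simp [v.2]) fun _ _ _ => rfl
  right_inv _ := rfl

instance (m : ℕ) : Finite {v : SSTVert f // v.1 = m} := .of_equiv _ (depthEquiv f m).symm

lemma card_SSTVert_depth_eq (m : ℕ) :
    Nat.card {v : SSTVert f // v.1 = m} = ∏ i : Fin m, f i := by
  simp [Nat.card_congr (depthEquiv f m)]

lemma SSTgen_eq_prod (n : ℕ) : SSTgen f n = ∏ i : Fin n, f i := by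
  rw [SSTgen, ← card_SSTVert_depth_eq]
  exact Nat.card_congr (Equiv.subtypeEquivRight fun v => by rw [SST_dist_root])

lemma card_SSTVert_depth_le (n : ℕ) :
    Nat.card {v : SSTVert f // v.1 ≤ n} = ∑ k ∈ range (n + 1), ∏ i : Fin k, f i := by
  let e : {v : SSTVert f // v.1 ≤ n} ≃ Σ k : Fin (n + 1), {v : SSTVert f // v.1 = k} :=
    { toFun v := ⟨⟨v.1.1, Nat.lt_succ_of_le v.2⟩, v.1, rfl⟩
      invFun p := ⟨p.2.1, by have := p.1.2; have := p.2.2; omega⟩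
      left_inv _ := rfl
      right_inv := by
        rintro ⟨⟨k, hk⟩, ⟨m, g⟩, rfl : m = k⟩
        rfl }
  rw [Nat.card_congr e, Nat.card_sigma, ← Fin.sum_univ_eq_sum_range (fun k => ∏ i : Fin k, f i)]
  simp only [card_SSTVert_depth_eq]

end Counting

lemma tendsto_SSTgen_const_rpow (d : ℕ) :
    Tendsto (fun n : ℕ => (SSTgen (fun _ => d) n : ℝ) ^ ((n : ℝ)⁻¹)) atTop (nhds (d : ℝ)) := by
  refine tendsto_const_nhds.congr' ?_
  filter_upwards [eventually_ne_atTop 0] with n hn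
  rw [SSTgen_eq_prod, prod_const, card_univ, Fintype.card_fin, Nat.cast_pow,
    ← Real.rpow_natCast, ← Real.rpow_mul d.cast_nonneg, mul_inv_cancel₀ (by exact_mod_cast hn),
    Real.rpow_one]

namespace SimpleGraph

variable {V : Type*} {H : SimpleGraph V} {ℓ : ℕ}

lemma IsBox.exists_walk {B : H.Subgraph} (hB : H.IsBox ℓ B) {u v : V} (hu : u ∈ B.verts)
    (hv : v ∈ B.verts) : ∃ w : H.Walk u v, w.length ≤ ℓ - 1 := by
  obtain ⟨hr, hdist⟩ := hB ⟨u, hu⟩ ⟨v, hv⟩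
  obtain ⟨p, hp⟩ := hr.exists_walk_length_eq_dist
  exact ⟨p.map B.hom, ((Walk.length_map _ _).trans hp).trans_le hdist⟩

lemma coveringNumber_eq_card {ι : Type*} [Finite ι] (box : ι → H.Subgraph)
    (hbox : ∀ i, H.IsBox ℓ (box i)) (hcover : ∀ v, ∃ i, v ∈ (box i).verts) (s : ι → V)
    (hs : ∀ i j, i ≠ j → ∀ w : H.Walk (s i) (s j), ℓ - 1 < w.length) :
    coveringNumber H ℓ = Nat.card ι := by
  classical
  have := Fintype.ofFinite ι
  have hmem : (univ.image box).card ∈ {m | ∃ F : Finset H.Subgraph, F.card = m ∧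
      (∀ B ∈ F, H.IsBox ℓ B) ∧ ∀ v, ∃ B ∈ F, v ∈ B.verts} :=
    ⟨_, rfl, by simpa using hbox, fun v =>
      let ⟨i, hi⟩ := hcover v; ⟨box i, mem_image_of_mem _ (mem_univ i), hi⟩⟩
  refine le_antisymm ((Nat.sInf_le hmem).trans ?_) (le_csInf ⟨_, hmem⟩ ?_)
  · simpa [Nat.card_eq_fintype_card] using card_image_le (s := univ) (f := box)
  rintro _ ⟨F, rfl, hboxF, hcoverF⟩
  choose g hgF hg using hcoverF
  suffices (fun i => (⟨g (s i), hgF _⟩ : F)).Injective by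
    simpa using Nat.card_le_card_of_injective _ this
  intro i j hij
  have hsame : g (s i) = g (s j) := congrArg Subtype.val hij
  by_contra hne
  obtain ⟨w, hw⟩ := (hboxF _ (hgF (s i))).exists_walk (hg (s i)) (hsame ▸ hg (s j))
  exact (hs i j hne w).not_ge hw

end SimpleGraph

section Boxes

variable {f : ℕ → ℕ} {n : ℕ}

def SSTtruncTake (v : {v : SSTVert f // v.1 ≤ n}) (k : ℕ) : {v : SSTVert f // v.1 ≤ n} :=
  ⟨v.1.take k, (min_le_right _ _).trans v.2⟩

/-- The vertices of depth in `[lo, hi]` that are ancestors or descendants of `c`. -/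
def SSTbox (n : ℕ) (c : SSTVert f) (lo hi : ℕ) : (SSTtrunc f n).Subgraph :=
  (⊤ : (SSTtrunc f n).Subgraph).induce
    {v | lo ≤ v.1.1 ∧ v.1.1 ≤ hi ∧ v.1.take c.1 = c.take v.1.1}

variable {c : SSTVert f} {lo hi : ℕ} {u v : {v : SSTVert f // v.1 ≤ n}}

lemma SSTtruncTake_mem_SSTbox (hv : v ∈ (SSTbox n c lo hi).verts) {k : ℕ} (hk : lo ≤ k)
    (hkv : k ≤ v.1.1) : SSTtruncTake v k ∈ (SSTbox n c lo hi).verts := by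
  obtain ⟨hlo, hhi, hc⟩ := hv
  exact ⟨by simp [SSTtruncTake]; omega, by simp [SSTtruncTake]; omega,
    take_take_of_comparable hc hkv⟩

lemma SSTbox_exists_walk_take (hv : v ∈ (SSTbox n c lo hi).verts) {k : ℕ} (hk : lo ≤ k)
    (hkv : k ≤ v.1.1) :
    ∃ w : (SSTbox n c lo hi).coe.Walk ⟨v, hv⟩
      ⟨SSTtruncTake v k, SSTtruncTake_mem_SSTbox hv hk hkv⟩, w.length ≤ v.1.1 - k := by
  induction hm : v.1.1 - k generalizing v with
  | zero =>
    have hvk : SSTtruncTake v k = v := Subtype.ext (take_of_le (by omega))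
    exact ⟨SimpleGraph.Walk.nil.copy rfl (by simp [hvk]), by simp⟩
  | succ m ih =>
    have hv' := SSTtruncTake_mem_SSTbox hv (k := k + m) (by omega) (by omega)
    have hadj : (SSTbox n c lo hi).coe.Adj ⟨v, hv⟩ ⟨_, hv'⟩ :=
      ⟨hv, hv', SST_adj_take (x := v.1) (k := k + m) (by omega)⟩
    obtain ⟨w, hw⟩ := ih hv' (by simp [SSTtruncTake]; omega) (by simp [SSTtruncTake]; omega)
    have hkk : SSTtruncTake (SSTtruncTake v (k + m)) k = SSTtruncTake v k :=
      Subtype.ext (take_take (by omega))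
    exact ⟨(w.cons hadj).copy rfl (by simp [hkk]), by simp; omega⟩

/-- Descendants of `c` meet at `c`; ancestors of `c` lie on a single path. -/
lemma SSTbox_exists_walk_of_le (hlo : lo ≤ c.1) (hu : u ∈ (SSTbox n c lo hi).verts)
    (hv : v ∈ (SSTbox n c lo hi).verts) (huv : u.1.1 ≤ v.1.1) :
    ∃ w : (SSTbox n c lo hi).coe.Walk ⟨u, hu⟩ ⟨v, hv⟩,
      w.length ≤ max (hi - lo) (2 * (hi - c.1)) := by
  have ⟨hulo, huhi, huc⟩ := hu
  have ⟨hvlo, hvhi, hvc⟩ := hv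
  by_cases huc' : u.1.1 ≤ c.1
  · obtain ⟨w, hw⟩ := SSTbox_exists_walk_take hv hulo huv
    have he : SSTtruncTake v u.1.1 = u :=
      Subtype.ext (take_eq_of_comparable huc hvc huv huc')
    exact ⟨(w.copy rfl (by simp [he])).reverse, by simp; omega⟩
  · obtain ⟨wu, hwu⟩ := SSTbox_exists_walk_take hu hlo (by omega)
    obtain ⟨wv, hwv⟩ := SSTbox_exists_walk_take hv hlo (by omega)
    have he : SSTtruncTake v c.1 = SSTtruncTake u c.1 := by
      apply Subtype.ext
      simp only [SSTtruncTake]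
      rw [hvc, huc, take_of_le (by omega), take_of_le (by omega)]
    exact ⟨wu.append (wv.copy rfl (by simp [he])).reverse, by simp; omega⟩

lemma SSTbox_isBox {ℓ : ℕ} (hlo : lo ≤ c.1) (hc : 2 * (hi - c.1) ≤ ℓ - 1)
    (hwin : hi - lo ≤ ℓ - 1) : (SSTtrunc f n).IsBox ℓ (SSTbox n c lo hi) := by
  have key : ∀ u v (hu : u ∈ (SSTbox n c lo hi).verts) (hv : v ∈ (SSTbox n c lo hi).verts),
      u.1.1 ≤ v.1.1 → (SSTbox n c lo hi).coe.Reachable ⟨u, hu⟩ ⟨v, hv⟩ ∧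
        (SSTbox n c lo hi).coe.dist ⟨u, hu⟩ ⟨v, hv⟩ ≤ ℓ - 1 := by
    intro u v hu hv huv
    obtain ⟨w, hw⟩ := SSTbox_exists_walk_of_le hlo hu hv huv
    exact ⟨w.reachable, (SimpleGraph.dist_le w).trans (hw.trans (max_le hwin hc))⟩
  rintro ⟨u, hu⟩ ⟨v, hv⟩
  rcases le_total u.1.1 v.1.1 with h | h
  · exact key u v hu hv h
  · obtain ⟨hr, hd⟩ := key v u hv hu h
    exact ⟨hr.symm, SimpleGraph.dist_comm.trans_le hd⟩

end Boxes

def SSTVert.extend {d : ℕ} (hd : 0 < d) (x : SSTVert (fun _ => d)) (m : ℕ) :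
    SSTVert (fun _ => d) :=
  ⟨m, fun i => if h : i.1 < x.1 then x.2 ⟨i, h⟩ else ⟨0, hd⟩⟩

lemma SSTVert.take_extend {d : ℕ} (hd : 0 < d) (x : SSTVert (fun _ => d)) {k m : ℕ}
    (hkx : k ≤ x.1) (hkm : k ≤ m) : (x.extend hd m).take k = x.take k :=
  ext (show min k m = min k x.1 by omega) fun i hi _ =>
    congrArg Fin.val (dif_pos (show i < x.1 by simp only [take_fst] at hi; omega))

lemma SSTtrunc_exists_walk {f : ℕ → ℕ} {n : ℕ} {u v : {v : SSTVert f // v.1 ≤ n}}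
    (w : (SSTtrunc f n).Walk u v) : ∃ w' : (SST f).Walk u.1 v.1, w'.length = w.length :=
  ⟨w.map (SimpleGraph.Embedding.induce _).toHom, SimpleGraph.Walk.length_map _ _⟩

def boxCount (d n ℓ : ℕ) : ℕ := ∑ j ∈ range (n / ℓ + 1), d ^ (n - j * ℓ - (ℓ - 1) / 2)

section DaryCover

variable {d : ℕ} (n : ℕ) {ℓ : ℕ}

/-- Layer `j` of `T_n` consists of the depths `(n - (j + 1) ℓ, n - j ℓ]`; in it, the boxes are
centred at the vertices of depth `n - j ℓ - (ℓ - 1) / 2`. -/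
abbrev BoxIndex (d n ℓ : ℕ) : Type :=
  Σ j : Fin (n / ℓ + 1), {c : SSTVert (fun _ => d) // c.1 = n - j * ℓ - (ℓ - 1) / 2}

lemma card_boxIndex : Nat.card (BoxIndex d n ℓ) = boxCount d n ℓ := by
  simp only [Nat.card_sigma, card_SSTVert_depth_eq, prod_const, card_univ, Fintype.card_fin]
  exact Fin.sum_univ_eq_sum_range (fun j => d ^ (n - j * ℓ - (ℓ - 1) / 2)) _

def layerBox (i : BoxIndex d n ℓ) : (SSTtrunc (fun _ => d) n).Subgraph :=
  SSTbox n i.2.1 (n - i.1 * ℓ + 1 - ℓ) (n - i.1 * ℓ)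

def layerPoint (hd : 0 < d) (i : BoxIndex d n ℓ) : {v : SSTVert (fun _ => d) // v.1 ≤ n} :=
  ⟨i.2.1.extend hd (n - i.1 * ℓ), Nat.sub_le _ _⟩

variable {n}

lemma layerBox_isBox (hℓ : 0 < ℓ) (i : BoxIndex d n ℓ) :
    (SSTtrunc (fun _ => d) n).IsBox ℓ (layerBox n i) := by
  have hc := i.2.2
  exact SSTbox_isBox (by omega) (by omega) (by omega)

lemma exists_mem_layerBox (hd : 0 < d) (hℓ : 0 < ℓ) (v : {v : SSTVert (fun _ => d) // v.1 ≤ n}) :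
    ∃ i : BoxIndex d n ℓ, v ∈ (layerBox n i).verts := by
  set j := (n - v.1.1) / ℓ
  have hj₁ : j * ℓ ≤ n - v.1.1 := Nat.div_mul_le_self _ _
  have hj₂ : n - v.1.1 < j * ℓ + ℓ := Nat.lt_div_mul_add hℓ
  have hjn : j < n / ℓ + 1 := Nat.lt_succ_of_le (Nat.div_le_div_right (Nat.sub_le _ _))
  have hv := v.2
  set m := n - j * ℓ - (ℓ - 1) / 2
  refine ⟨⟨⟨j, hjn⟩, v.1.extend hd m, rfl⟩, show n - j * ℓ + 1 - ℓ ≤ v.1.1 by omega,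
    show v.1.1 ≤ n - j * ℓ by omega, show v.1.take m = (v.1.extend hd m).take v.1.1 from ?_⟩
  rcases le_total v.1.1 m with h | h
  · rw [take_of_le h, take_extend hd _ le_rfl h, take_of_le le_rfl]
  · rw [take_of_le (x := v.1.extend hd m) h, ← take_extend hd v.1 h le_rfl,
      take_of_le (x := v.1.extend hd m) (k := m) le_rfl]

/-- Points in different layers are at least `ℓ` levels apart; points in the same layer have
different ancestors `(ℓ - 1) / 2` levels up, so a walk between them has length at least
`ℓ`. -/
lemma layerPoint_separated (hd : 0 < d) (hℓ : 0 < ℓ) (i i' : BoxIndex d n ℓ) (hne : i ≠ i')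
    (w : (SSTtrunc (fun _ => d) n).Walk (layerPoint n hd i) (layerPoint n hd i')) :
    ℓ - 1 < w.length := by
  obtain ⟨⟨j, hj⟩, c, hc⟩ := i
  obtain ⟨⟨j', hj'⟩, c', hc'⟩ := i'
  obtain ⟨w, hw⟩ := SSTtrunc_exists_walk w
  rw [← hw]
  have hjn : j * ℓ ≤ n := (Nat.le_div_iff_mul_le hℓ).1 (Nat.le_of_lt_succ hj)
  have hjn' : j' * ℓ ≤ n := (Nat.le_div_iff_mul_le hℓ).1 (Nat.le_of_lt_succ hj')
  change c.1 = n - j * ℓ - (ℓ - 1) / 2 at hc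
  change c'.1 = n - j' * ℓ - (ℓ - 1) / 2 at hc'
  have hdepth : n - j' * ℓ ≤ n - j * ℓ + w.length ∧ n - j * ℓ ≤ n - j' * ℓ + w.length :=
    SST_walk_depth w
  rcases lt_trichotomy j j' with h | rfl | h
  · have := Nat.mul_le_mul_right ℓ (Nat.succ_le_of_lt h)
    rw [Nat.succ_mul] at this
    omega
  · set m := n - j * ℓ - (ℓ - 1) / 2
    have hcc : c ≠ c' := by rintro rfl; exact hne rfl
    have htake : ∀ x : SSTVert (fun _ => d), x.1 = m → (x.extend hd (n - j * ℓ)).take m = x :=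
      fun x hx => (take_extend hd x hx.ge (Nat.sub_le _ _)).trans (take_of_le hx.le)
    have hm : m ≠ 0 := fun hm => hcc <| by
      rw [← take_of_le hc.le, ← take_of_le hc'.le, hm, take_zero, take_zero]
    have := SST_length_walk_of_take_ne w (k := m) (Nat.sub_le _ _) (Nat.sub_le _ _)
      (by simpa only [layerPoint, htake c hc, htake c' hc'] using hcc)
    change (n - j * ℓ) + (n - j * ℓ) + 2 ≤ w.length + 2 * m at this
    omega
  · have := Nat.mul_le_mul_right ℓ (Nat.succ_le_of_lt h)
    rw [Nat.succ_mul] at this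
    omega

theorem coveringNumber_SSTtrunc_const (hd : 0 < d) (hℓ : 0 < ℓ) :
    coveringNumber (SSTtrunc (fun _ => d) n) ℓ = boxCount d n ℓ := by
  rw [← card_boxIndex, SimpleGraph.coveringNumber_eq_card (layerBox n) (layerBox_isBox hℓ)
    (exists_mem_layerBox hd hℓ) (layerPoint n hd) (layerPoint_separated hd hℓ)]

end DaryCover

lemma card_SSTtrunc_const (d n : ℕ) :
    Nat.card {v : SSTVert (fun _ => d) // v.1 ≤ n} = boxCount d n 1 := by
  rw [card_SSTVert_depth_le, boxCount, ← sum_range_reflect]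
  simp

lemma pow_sub_div_pow {x : ℝ} (hx : x ≠ 0) (n a : ℕ) : x ^ (n - a) / x ^ n = x⁻¹ ^ min n a := by
  rw [inv_pow, ← div_mul_cancel_left₀ (pow_ne_zero (n - a) hx) (x ^ min n a), ← pow_add,
    show n - a + min n a = n by omega]

lemma one_sub_inv_pow_pos {d : ℕ} (hd : 1 < d) {ℓ : ℕ} (hℓ : 0 < ℓ) :
    0 < 1 - (d : ℝ)⁻¹ ^ ℓ :=
  sub_pos.2 <| pow_lt_one₀ (by positivity) (inv_lt_one_of_one_lt₀ (by exact_mod_cast hd)) hℓ.ne'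

noncomputable def boxDensity (d ℓ : ℕ) : ℝ :=
  (d : ℝ)⁻¹ ^ ((ℓ - 1) / 2) / (1 - (d : ℝ)⁻¹ ^ ℓ)

/-- Dominated convergence for the sum `∑ j, d ^ (n - j ℓ - r) / d ^ n`, whose terms are
bounded by `(d⁻¹ ^ ℓ) ^ j`. -/
lemma tendsto_boxCount_div_pow {d : ℕ} (hd : 1 < d) {ℓ : ℕ} (hℓ : 0 < ℓ) :
    Tendsto (fun n => (boxCount d n ℓ : ℝ) / (d : ℝ) ^ n) atTop (nhds (boxDensity d ℓ)) := by
  set x := (d : ℝ)⁻¹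
  set r := (ℓ - 1) / 2
  have hx₀ : 0 < x := inv_pos.2 (by positivity)
  have hx₁ : x < 1 := inv_lt_one_of_one_lt₀ (by exact_mod_cast hd)
  let F : ℕ → ℕ → ℝ := fun n j => if j * ℓ ≤ n then x ^ min n (j * ℓ + r) else 0
  have hF (n : ℕ) : (boxCount d n ℓ : ℝ) / (d : ℝ) ^ n = ∑' j, F n j := by
    have hmem (j : ℕ) : j ∈ range (n / ℓ + 1) ↔ j * ℓ ≤ n := by
      rw [mem_range, Nat.lt_succ_iff, Nat.le_div_iff_mul_le hℓ]
    rw [tsum_eq_sum (s := range (n / ℓ + 1)) fun j hj => if_neg (by rwa [hmem] at hj),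
      boxCount, Nat.cast_sum, sum_div]
    refine sum_congr rfl fun j hj => ?_
    rw [if_pos ((hmem j).1 hj), Nat.cast_pow, Nat.sub_sub, pow_sub_div_pow (by positivity)]
  have hlim : boxDensity d ℓ = ∑' j, x ^ (j * ℓ + r) := by
    simp_rw [pow_add, mul_comm _ ℓ, pow_mul]
    rw [tsum_mul_right, tsum_geometric_of_lt_one (by positivity)
      (sub_pos.1 (one_sub_inv_pow_pos hd hℓ)),
      boxDensity, div_eq_inv_mul]
  rw [funext hF, hlim]
  refine tendsto_tsum_of_dominated_convergence (bound := fun j => (x ^ ℓ) ^ j)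
    (summable_geometric_of_lt_one (by positivity) (sub_pos.1 (one_sub_inv_pow_pos hd hℓ)))
    (fun j => tendsto_const_nhds.congr' ?_) (.of_forall fun n j => ?_)
  · filter_upwards [eventually_ge_atTop (j * ℓ + r)] with n hn
    simp only [F, if_pos (show j * ℓ ≤ n by omega), min_eq_right hn]
  · simp only [F]
    split_ifs with h
    · rw [Real.norm_of_nonneg (by positivity), ← pow_mul]
      exact pow_le_pow_of_le_one hx₀.le hx₁.le (by rw [Nat.mul_comm]; omega)
    · simp only [norm_zero]
      positivity

lemma boxDensity_pos {d : ℕ} (hd : 1 < d) {ℓ : ℕ} (hℓ : 0 < ℓ) : 0 < boxDensity d ℓ :=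
  div_pos (by positivity) (one_sub_inv_pow_pos hd hℓ)

lemma tendsto_coveringNumber_div_card {d : ℕ} (hd : 1 < d) {ℓ : ℕ} (hℓ : 0 < ℓ) :
    Tendsto (fun n => (coveringNumber (SSTtrunc (fun _ => d) n) ℓ : ℝ) /
        (Nat.card {v : SSTVert (fun _ => d) // v.1 ≤ n} : ℝ))
      atTop (nhds (boxDensity d ℓ / boxDensity d 1)) := by
  refine ((tendsto_boxCount_div_pow hd hℓ).div (tendsto_boxCount_div_pow hd one_pos)
    (boxDensity_pos hd one_pos).ne').congr fun n => ?_
  rw [coveringNumber_SSTtrunc_const (by omega) hℓ, card_SSTtrunc_const, Pi.div_apply,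
    div_div_div_cancel_right₀ (pow_ne_zero _ (by positivity))]

lemma tendsto_pred_div_two_div_self :
    Tendsto (fun ℓ : ℕ => (((ℓ - 1) / 2 : ℕ) : ℝ) / ℓ) atTop (nhds (1 / 2)) := by
  have hlo : Tendsto (fun ℓ : ℕ => 1 / 2 - 1 / (ℓ : ℝ)) atTop (nhds (1 / 2)) := by
    simpa using tendsto_const_nhds.sub (tendsto_const_div_atTop_nhds_zero_nat (1 : ℝ))
  refine tendsto_of_tendsto_of_tendsto_of_le_of_le' hlo tendsto_const_nhds ?_ ?_ <;>
    filter_upwards [eventually_gt_atTop 0] with ℓ hℓ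
  · have h : (ℓ : ℝ) ≤ 2 * (((ℓ - 1) / 2 : ℕ) : ℝ) + 2 := by exact_mod_cast (by omega)
    have hℓ' : (0 : ℝ) < ℓ := by exact_mod_cast hℓ
    rw [show 1 / 2 - 1 / (ℓ : ℝ) = ((ℓ : ℝ) / 2 - 1) / ℓ by field_simp]
    exact div_le_div_of_nonneg_right (by linarith) hℓ'.le
  · have h : 2 * (((ℓ - 1) / 2 : ℕ) : ℝ) ≤ ℓ := by exact_mod_cast (by omega)
    rw [div_le_iff₀ (by exact_mod_cast hℓ)]
    linarith

noncomputable def dimensionAtScale (d ℓ : ℕ) : ℝ :=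
  Real.log (boxDensity d ℓ / boxDensity d 1) / -(ℓ : ℝ)

lemma dimensionAtScale_eq {d : ℕ} (hd : 1 < d) {ℓ : ℕ} (hℓ : 0 < ℓ) :
    dimensionAtScale d ℓ = (((ℓ - 1) / 2 : ℕ) : ℝ) / ℓ * Real.log d +
      Real.log (1 - (d : ℝ)⁻¹ ^ ℓ) / ℓ + Real.log (boxDensity d 1) / ℓ := by
  have hlog : Real.log (boxDensity d ℓ) =
      -((((ℓ - 1) / 2 : ℕ) : ℝ) * Real.log d) - Real.log (1 - (d : ℝ)⁻¹ ^ ℓ) := by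
    rw [boxDensity, Real.log_div (by positivity) (one_sub_inv_pow_pos hd hℓ).ne',
      Real.log_pow, Real.log_inv, mul_neg]
  rw [dimensionAtScale, Real.log_div (boxDensity_pos hd hℓ).ne' (boxDensity_pos hd one_pos).ne',
    hlog]
  have : (ℓ : ℝ) ≠ 0 := by exact_mod_cast hℓ.ne'
  field_simp
  ring

lemma tendsto_dimensionAtScale {d : ℕ} (hd : 1 < d) :
    Tendsto (dimensionAtScale d) atTop (nhds (Real.log d / 2)) := by
  have hx₀ : 0 < (d : ℝ)⁻¹ := inv_pos.2 (by positivity)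
  have hx₁ : (d : ℝ)⁻¹ < 1 := inv_lt_one_of_one_lt₀ (by exact_mod_cast hd)
  have hlog : Tendsto (fun ℓ : ℕ => Real.log (1 - (d : ℝ)⁻¹ ^ ℓ)) atTop (nhds 0) := by
    simpa using ((tendsto_pow_atTop_nhds_zero_of_lt_one hx₀.le hx₁).const_sub 1).log
      (by norm_num)
  have key := ((tendsto_pred_div_two_div_self.mul_const (Real.log d)).add
    (hlog.div_atTop tendsto_natCast_atTop_atTop)).add
    (tendsto_const_div_atTop_nhds_zero_nat (Real.log (boxDensity d 1)))
  rw [show Real.log d / 2 = 1 / 2 * Real.log d + 0 + 0 by ring]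
  refine key.congr' ?_
  filter_upwards [eventually_gt_atTop 0] with ℓ hℓ
  rw [dimensionAtScale_eq hd hℓ]

/-- For the complete `d`-ary tree (`d ≥ 2`), i.e. the spherically
symmetric tree with constant offspring sequence `f ≡ d`: the growth rate
`lim_n L_n^{1/n}` exists and equals `d`, and the transfinite fractal dimension of the
truncation sequence `{T_n}` exists (as an iterated limit) and equals `(log d)/2`. -/
theorem dary_growth_and_dimension (d : ℕ) (hd : 2 ≤ d) :
    Tendsto (fun n : ℕ => (SSTgen (fun _ => d) n : ℝ) ^ ((n : ℝ)⁻¹))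
      atTop (nhds (d : ℝ)) ∧
    ∃ L : ℕ → ℝ,
      (∀ ℓ : ℕ, Tendsto (fun n : ℕ =>
          Real.log ((coveringNumber (SSTtrunc (fun _ => d) n) ℓ : ℝ) /
            (Nat.card {v : SSTVert (fun _ => d) // v.1 ≤ n} : ℝ)) / (-(ℓ : ℝ)))
        atTop (nhds (L ℓ))) ∧
      Tendsto L atTop (nhds (Real.log d / 2)) := by
  refine ⟨tendsto_SSTgen_const_rpow d, dimensionAtScale d, fun ℓ => ?_,
    tendsto_dimensionAtScale hd⟩
  rcases Nat.eq_zero_or_pos ℓ with rfl | hℓ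
  · simp [dimensionAtScale]
  · exact ((tendsto_coveringNumber_div_card hd hℓ).log
      (div_pos (boxDensity_pos hd hℓ) (boxDensity_pos hd one_pos)).ne').div_const _
end
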